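/- arXiv:math/0201226 — 2 statements merged into one kernel-verified Lean document; each statement's English description precedes it below -/
import Mathlib

section
/- The group of affine transformations x ↦ e·x + f of F_8 (with e ∈ F_8^×, f ∈ F_8) acts simply transitively on the set of 3-element subsets of F_8; in particular, for any two 3-element subsets S, T of F_8 there is a unique affine transformation mapping S onto T. -/
/-! An affine map `x ↦ e x + f` preserving a 3-set `S` permutes it, so its sixth iterate fixes
`S` pointwise; that iterate has slope `e⁶`, and `e⁷ = 1` in `𝔽₈ˣ`, hence `e = 1`. A translation
preserving `S` preserves the sum of its elements, so `3 f = 0`, i.e. `f = 0` in characteristic 2.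
Thus the 56 affine maps send `S` to 56 distinct 3-sets, and there are only `choose 8 3 = 56`. -/

open Function Set Nat

theorem Set.BijOn.iterate_ncard_factorial_apply {α : Type*} {f : α → α} {s : Set α}
    (hs : s.Finite) (h : BijOn f s s) {x : α} (hx : x ∈ s) : f^[s.ncard !] x = x := by
  have := hs.to_subtype
  let σ : Equiv.Perm s := Equiv.ofBijective _ h.bijective
  have hσ : σ ^ s.ncard ! = 1 := by
    rw [← Nat.card_coe_set_eq, ← Nat.card_perm]
    exact pow_card_eq_one'
  rw [← MapsTo.coe_iterate_restrict h.mapsTo ⟨x, hx⟩]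
  exact congrArg Subtype.val (Equiv.congr_fun hσ ⟨x, hx⟩)

theorem Set.ncard_nsmul_eq_zero_of_image_add_right_eq {G : Type*} [AddCancelCommMonoid G]
    {s : Set G} (hs : s.Finite) {f : G} (h : (· + f) '' s = s) : s.ncard • f = 0 := by
  classical
  have himage : hs.toFinset.image (· + f) = hs.toFinset := by
    apply Finset.coe_injective
    simpa using h
  have hsum := Finset.sum_image (f := id) (s := hs.toFinset) (g := (· + f))
    (fun a _ b _ hab => add_right_cancel hab)
  simp only [id] at hsum
  rw [himage, Finset.sum_add_distrib, Finset.sum_const, ← ncard_eq_toFinset_card s hs] at hsum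
  exact add_eq_left.mp hsum.symm

section Affine

variable {K : Type*} [Field K]

def affineMap (p : Kˣ × K) : K ↪ K :=
  ⟨fun x => p.1 * x + p.2, fun _ _ h => mul_left_cancel₀ p.1.ne_zero (add_right_cancel h)⟩

@[simp]
theorem affineMap_apply (p : Kˣ × K) (x : K) : affineMap p x = p.1 * x + p.2 := rfl

theorem iterate_affineMap_sub (p : Kˣ × K) (n : ℕ) (a b : K) :
    (affineMap p)^[n] a - (affineMap p)^[n] b = (p.1 : K) ^ n * (a - b) := by
  induction n with
  | zero => simp
  | succ n ih =>
    rw [iterate_succ_apply', iterate_succ_apply', pow_succ, mul_comm _ (p.1 : K), mul_assoc,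
      ← ih, affineMap_apply, affineMap_apply]
    ring

variable [Finite K] {S : Set K}

theorem eq_one_zero_of_affineMap_image_eq_self (hS : S.Nontrivial)
    (hcop : (S.ncard !).Coprime (Nat.card Kˣ)) (hchar : (S.ncard : K) ≠ 0) {p : Kˣ × K}
    (h : affineMap p '' S = S) : p = (1, 0) := by
  obtain ⟨e, f⟩ := p
  have hbij : BijOn (affineMap (e, f)) S S := by
    simpa only [h] using (affineMap (e, f)).injective.injOn.bijOn_image (s := S)
  obtain ⟨a, ha, b, hb, hab⟩ := hS
  have he_pow : e ^ S.ncard ! = 1 := by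
    have hsub := iterate_affineMap_sub (e, f) (S.ncard !) a b
    rw [hbij.iterate_ncard_factorial_apply S.toFinite ha,
      hbij.iterate_ncard_factorial_apply S.toFinite hb] at hsub
    refine Units.ext (mul_right_cancel₀ (sub_ne_zero.mpr hab) ?_)
    simpa using hsub.symm
  have he : e = 1 := by
    simpa [hcop] using pow_gcd_eq_one.mpr ⟨he_pow, pow_card_eq_one'⟩
  subst he
  have htrans : (· + f) '' S = S := by
    rwa [show ⇑(affineMap (1, f)) = (· + f) by ext; simp] at h
  have hf := S.ncard_nsmul_eq_zero_of_image_add_right_eq S.toFinite htrans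
  rw [nsmul_eq_mul] at hf
  simpa using (mul_eq_zero.mp hf).resolve_left hchar

theorem affineMap_image_injective (hS : S.Nontrivial)
    (hcop : (S.ncard !).Coprime (Nat.card Kˣ)) (hchar : (S.ncard : K) ≠ 0) :
    Injective fun p : Kˣ × K => affineMap p '' S := by
  intro p q hpq
  let r : Kˣ × K := (p.1⁻¹ * q.1, p.1⁻¹ * (q.2 - p.2))
  have hcomp : ⇑(affineMap p) ∘ affineMap r = affineMap q := by
    ext x
    simp [r, mul_add, ← mul_assoc, add_assoc]
  have hr : affineMap r '' S = S := by
    apply image_injective.mpr (affineMap p).injective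
    simp only at hpq
    rw [← image_comp, hcomp, hpq]
  obtain ⟨hr₁, hr₂⟩ := Prod.ext_iff.mp (eq_one_zero_of_affineMap_image_eq_self hS hcop hchar hr)
  refine Prod.ext (inv_mul_eq_one.mp hr₁) ?_
  simpa [r, sub_eq_zero, eq_comm] using hr₂

theorem existsUnique_affineMap_image_eq {T : Set K} (hS : S.Nontrivial)
    (hcop : (S.ncard !).Coprime (Nat.card Kˣ)) (hchar : (S.ncard : K) ≠ 0)
    (hcard : (Nat.card K).choose S.ncard ≤ Nat.card (Kˣ × K)) (hT : T.ncard = S.ncard) :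
    ∃! p : Kˣ × K, affineMap p '' S = T := by
  have toPowersetCard (A : Set K) (hA : A.ncard = S.ncard) :
      ∃ A' : powersetCard K S.ncard, (A' : Set K) = A :=
    ⟨powersetCard.ofCard (s := A.toFinite.toFinset) (by rw [← ncard_eq_toFinset_card, hA]),
      A.toFinite.coe_toFinset⟩
  obtain ⟨S', hS'⟩ := toPowersetCard S rfl
  obtain ⟨T', hT'⟩ := toPowersetCard T hT
  let orbit (p : Kˣ × K) : powersetCard K S.ncard := powersetCard.map _ (affineMap p) S'
  have hcoe (p : Kˣ × K) : (orbit p : Set K) = affineMap p '' S := by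
    simp [orbit, powersetCard.coe_map, hS']
  have horbit : Bijective orbit := by
    refine Injective.bijective_of_nat_card_le (fun p q hpq => ?_) (by rwa [powersetCard.card])
    refine affineMap_image_injective hS hcop hchar ?_
    simpa only [hcoe] using congrArg SetLike.coe hpq
  refine (existsUnique_congr fun p => ?_).mp (horbit.existsUnique T')
  rw [← SetLike.coe_set_eq, hcoe, hT']

end Affine

/-- The group of affine transformations `x ↦ e·x + f` of `𝔽₈` acts simply
transitively on the set of 3-element subsets of `𝔽₈`: for any two 3-element
subsets `S, T` there is a unique affine transformation mapping `S` onto `T`. -/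
theorem stmt_7 (S T : Set (GaloisField 2 3)) (hS : S.ncard = 3) (hT : T.ncard = 3) :
    ∃! p : (GaloisField 2 3)ˣ × GaloisField 2 3,
      (fun x => (p.1 : GaloisField 2 3) * x + p.2) '' S = T := by
  have hcardF : Nat.card (GaloisField 2 3) = 8 := GaloisField.card 2 3 (by norm_num)
  have hunits : Nat.card (GaloisField 2 3)ˣ = 7 := by rw [Nat.card_units, hcardF]
  have hthree : ((3 : ℕ) : GaloisField 2 3) ≠ 0 := by
    rw [Ne, CharP.cast_eq_zero_iff (GaloisField 2 3) 2]
    decide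
  refine existsUnique_affineMap_image_eq ?_ ?_ ?_ ?_ (hT.trans hS.symm)
  · rw [← one_lt_ncard_iff_nontrivial, hS]
    norm_num
  · rw [hS, hunits]
    decide
  · rwa [hS]
  · rw [hS, Nat.card_prod, hunits, hcardF]
    decide
end

section
/- The group of automorphisms of P^3 over F_8 (i.e., PGL_4(F_8)) preserving the quadric X^2 + XY + Y^2 = ZW acts 2-transitively on the set of F_8-points of the quadric. -/
open Projectivization
set_option maxHeartbeats 4000000

abbrev F8 := GaloisField 2 3

lemma two_eq_zero : (2 : F8) = 0 := by
  have := CharP.cast_eq_zero F8 2; exact_mod_cast this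

noncomputable instance : Fintype F8 := Fintype.ofFinite _

lemma frob (x : F8) : x ^ 8 = x := by
  have h := GaloisField.card 2 3 (by norm_num)
  rw [Nat.card_eq_fintype_card] at h
  have h2 := FiniteField.pow_card x
  rwa [h] at h2

noncomputable def Phi (a0 a1 b0 b1 : F8) : Fin 4 → F8 :=
  ![a0*b0+a0*b1+a1*b1, a0*b1+a1*b0, b0^2+b0*b1+b1^2, a0^2+a0*a1+a1^2]

noncomputable def qf (v : Fin 4 → F8) : F8 := v 0 ^ 2 + v 0 * v 1 + v 1 ^ 2 - v 2 * v 3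

noncomputable def Tg (p0 p1 q0 q1 r0 r1 s0 s1 : F8) : Matrix (Fin 4) (Fin 4) F8 :=
  !![q1 * r1 + q1 * r0 + q0 * r0 + p1 * s1 + p1 * s0 + p0 * s0, 3 * q1 * r1 + 2 * q1 * r0 + q0 * r1 + q0 * r0 + 2 * p1 * s1 + p1 * s0 + p0 * s1, p1 * r1 + p1 * r0 + p0 * r0, q1 * s1 + q1 * s0 + q0 * s0;
    2 * q1 * r1 + q1 * r0 + q0 * r1 + 2 * p1 * s1 + p1 * s0 + p0 * s1, 5 * q1 * r1 + 3 * q1 * r0 + 2 * q0 * r1 + q0 * r0 + 3 * p1 * s1 + 2 * p1 * s0 + p0 * s1 + p0 * s0, 2 * p1 * r1 + p1 * r0 + p0 * r1, 2 * q1 * s1 + q1 * s0 + q0 * s1;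
    2 * p1 * q1 + p1 * q0 + p0 * q1 + 2 * p0 * q0, 5 * p1 * q1 + 2 * p1 * q0 + 3 * p0 * q1 + p0 * q0, p1 ^ 2 + p0 * p1 + p0 ^ 2, q1 ^ 2 + q0 * q1 + q0 ^ 2;
    2 * r1 * s1 + r1 * s0 + r0 * s1 + 2 * r0 * s0, 5 * r1 * s1 + 2 * r1 * s0 + 3 * r0 * s1 + r0 * s0, r1 ^ 2 + r0 * r1 + r0 ^ 2, s1 ^ 2 + s0 * s1 + s0 ^ 2]

noncomputable def Tg' (p0 p1 q0 q1 r0 r1 s0 s1 : F8) : Matrix (Fin 4) (Fin 4) F8 :=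
  !![q1 * r1 + q1 * r0 + q0 * r0 + p1 * s1 + p0 * s1 + p0 * s0, 3 * q1 * r1 + 2 * q1 * r0 + q0 * r1 + q0 * r0 + 2 * p1 * s1 + p1 * s0 + p0 * s1, r1 * s1 + r0 * s1 + r0 * s0, p1 * q1 + p0 * q1 + p0 * q0;
    2 * q1 * r1 + q1 * r0 + q0 * r1 + 2 * p1 * s1 + p1 * s0 + p0 * s1, 5 * q1 * r1 + 3 * q1 * r0 + 2 * q0 * r1 + q0 * r0 + 3 * p1 * s1 + p1 * s0 + 2 * p0 * s1 + p0 * s0, 2 * r1 * s1 + r1 * s0 + r0 * s1, 2 * p1 * q1 + p1 * q0 + p0 * q1;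
    2 * q1 * s1 + q1 * s0 + q0 * s1 + 2 * q0 * s0, 5 * q1 * s1 + 3 * q1 * s0 + 2 * q0 * s1 + q0 * s0, s1 ^ 2 + s0 * s1 + s0 ^ 2, q1 ^ 2 + q0 * q1 + q0 ^ 2;
    2 * p1 * r1 + p1 * r0 + p0 * r1 + 2 * p0 * r0, 5 * p1 * r1 + 3 * p1 * r0 + 2 * p0 * r1 + p0 * r0, r1 ^ 2 + r0 * r1 + r0 ^ 2, p1 ^ 2 + p0 * p1 + p0 ^ 2]

noncomputable def D0 (p0 p1 q0 q1 r0 r1 s0 s1 : F8) : F8 := q1 * r1 + q0 * r0 + p1 * s1 + p0 * s0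

noncomputable def D1 (p0 p1 q0 q1 r0 r1 s0 s1 : F8) : F8 := q1 * r1 + q1 * r0 + q0 * r1 + p1 * s1 + p1 * s0 + p0 * s1

noncomputable def Dn (p0 p1 q0 q1 r0 r1 s0 s1 : F8) : F8 :=
  D0 p0 p1 q0 q1 r0 r1 s0 s1 ^ 2 + D0 p0 p1 q0 q1 r0 r1 s0 s1 * D1 p0 p1 q0 q1 r0 r1 s0 s1 + D1 p0 p1 q0 q1 r0 r1 s0 s1 ^ 2

lemma TgPhi1 (p0 p1 q0 q1 r0 r1 s0 s1 : F8) :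
    (Tg p0 p1 q0 q1 r0 r1 s0 s1).mulVec (Phi p0 p1 q0 q1) = Dn p0 p1 q0 q1 r0 r1 s0 s1 • ![0, 0, 0, 1] := by
  have h0 : ((Tg p0 p1 q0 q1 r0 r1 s0 s1).mulVec (Phi p0 p1 q0 q1)) 0 = (Dn p0 p1 q0 q1 r0 r1 s0 s1 • ![0, 0, 0, 1]) 0 := by
    simp only [Tg, Tg', Phi, qf, Dn, D0, D1, Matrix.mulVec, dotProduct, Fin.sum_univ_four, Matrix.cons_val', Matrix.cons_val_zero, Matrix.cons_val_one, Matrix.head_cons, Matrix.cons_val_two, Matrix.tail_cons, Matrix.cons_val_three, Matrix.empty_val', Matrix.cons_val_fin_one, Matrix.head_fin_const, Matrix.of_apply, Pi.smul_apply, smul_eq_mul]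
    linear_combination (norm := ring1) (p1 * q1 ^ 2 * r1 + p1 * q1 ^ 2 * r0 + 2 * p1 * q0 * q1 * r1 + 2 * p1 * q0 * q1 * r0 + p1 * q0 ^ 2 * r1 + p1 * q0 ^ 2 * r0 + p1 ^ 2 * q1 * s1 + p1 ^ 2 * q1 * s0 + p1 ^ 2 * q0 * s1 + p1 ^ 2 * q0 * s0 + 2 * p0 * q1 ^ 2 * r1 + 2 * p0 * q1 ^ 2 * r0 + p0 * q0 * q1 * r1 + 2 * p0 * q0 * q1 * r0 + p0 * q0 ^ 2 * r0 + 2 * p0 * p1 * q1 * s1 + 2 * p0 * p1 * q1 * s0 + p0 * p1 * q0 * s1 + p0 * p1 * q0 * s0 + p0 ^ 2 * q1 * s1 + p0 ^ 2 * q1 * s0 + p0 ^ 2 * q0 * s0) * two_eq_zero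
  have h1 : ((Tg p0 p1 q0 q1 r0 r1 s0 s1).mulVec (Phi p0 p1 q0 q1)) 1 = (Dn p0 p1 q0 q1 r0 r1 s0 s1 • ![0, 0, 0, 1]) 1 := by
    simp only [Tg, Tg', Phi, qf, Dn, D0, D1, Matrix.mulVec, dotProduct, Fin.sum_univ_four, Matrix.cons_val', Matrix.cons_val_zero, Matrix.cons_val_one, Matrix.head_cons, Matrix.cons_val_two, Matrix.tail_cons, Matrix.cons_val_three, Matrix.empty_val', Matrix.cons_val_fin_one, Matrix.head_fin_const, Matrix.of_apply, Pi.smul_apply, smul_eq_mul]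
    linear_combination (norm := ring1) (2 * p1 * q1 ^ 2 * r1 + p1 * q1 ^ 2 * r0 + 4 * p1 * q0 * q1 * r1 + 2 * p1 * q0 * q1 * r0 + 2 * p1 * q0 ^ 2 * r1 + p1 * q0 ^ 2 * r0 + 2 * p1 ^ 2 * q1 * s1 + p1 ^ 2 * q1 * s0 + 2 * p1 ^ 2 * q0 * s1 + p1 ^ 2 * q0 * s0 + 4 * p0 * q1 ^ 2 * r1 + 2 * p0 * q1 ^ 2 * r0 + 3 * p0 * q0 * q1 * r1 + p0 * q0 * q1 * r0 + p0 * q0 ^ 2 * r1 + 4 * p0 * p1 * q1 * s1 + 2 * p0 * p1 * q1 * s0 + 2 * p0 * p1 * q0 * s1 + p0 * p1 * q0 * s0 + 2 * p0 ^ 2 * q1 * s1 + p0 ^ 2 * q1 * s0 + p0 ^ 2 * q0 * s1) * two_eq_zero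
  have h2 : ((Tg p0 p1 q0 q1 r0 r1 s0 s1).mulVec (Phi p0 p1 q0 q1)) 2 = (Dn p0 p1 q0 q1 r0 r1 s0 s1 • ![0, 0, 0, 1]) 2 := by
    simp only [Tg, Tg', Phi, qf, Dn, D0, D1, Matrix.mulVec, dotProduct, Fin.sum_univ_four, Matrix.cons_val', Matrix.cons_val_zero, Matrix.cons_val_one, Matrix.head_cons, Matrix.cons_val_two, Matrix.tail_cons, Matrix.cons_val_three, Matrix.empty_val', Matrix.cons_val_fin_one, Matrix.head_fin_const, Matrix.of_apply, Pi.smul_apply, smul_eq_mul]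
    linear_combination (norm := ring1) (2 * p1 ^ 2 * q1 ^ 2 + 4 * p1 ^ 2 * q0 * q1 + 2 * p1 ^ 2 * q0 ^ 2 + 5 * p0 * p1 * q1 ^ 2 + 6 * p0 * p1 * q0 * q1 + 2 * p0 * p1 * q0 ^ 2 + 3 * p0 ^ 2 * q1 ^ 2 + 3 * p0 ^ 2 * q0 * q1 + 2 * p0 ^ 2 * q0 ^ 2) * two_eq_zero
  have h3 : ((Tg p0 p1 q0 q1 r0 r1 s0 s1).mulVec (Phi p0 p1 q0 q1)) 3 = (Dn p0 p1 q0 q1 r0 r1 s0 s1 • ![0, 0, 0, 1]) 3 := by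
    simp only [Tg, Tg', Phi, qf, Dn, D0, D1, Matrix.mulVec, dotProduct, Fin.sum_univ_four, Matrix.cons_val', Matrix.cons_val_zero, Matrix.cons_val_one, Matrix.head_cons, Matrix.cons_val_two, Matrix.tail_cons, Matrix.cons_val_three, Matrix.empty_val', Matrix.cons_val_fin_one, Matrix.head_fin_const, Matrix.of_apply, Pi.smul_apply, smul_eq_mul]
    linear_combination (norm := ring1) (-q1 ^ 2 * r1 ^ 2 - q1 ^ 2 * r0 * r1 - q0 * q1 * r1 ^ 2 - 2 * q0 * q1 * r0 * r1 - 2 * p1 * q1 * r1 * s1 - p1 * q1 * r1 * s0 - p1 * q1 * r0 * s1 + p1 * q0 * r1 * s1 - p1 ^ 2 * s1 ^ 2 - p1 ^ 2 * s0 * s1 + 2 * p0 * q1 * r1 * s1 + p0 * q1 * r0 * s1 + p0 * q1 * r0 * s0 - p0 * p1 * s1 ^ 2 - 2 * p0 * p1 * s0 * s1) * two_eq_zero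
  funext i
  fin_cases i
  · exact h0
  · exact h1
  · exact h2
  · exact h3

lemma TgPhi2 (p0 p1 q0 q1 r0 r1 s0 s1 : F8) :
    (Tg p0 p1 q0 q1 r0 r1 s0 s1).mulVec (Phi r0 r1 s0 s1) = Dn p0 p1 q0 q1 r0 r1 s0 s1 • ![0, 0, 1, 0] := by
  have h0 : ((Tg p0 p1 q0 q1 r0 r1 s0 s1).mulVec (Phi r0 r1 s0 s1)) 0 = (Dn p0 p1 q0 q1 r0 r1 s0 s1 • ![0, 0, 1, 0]) 0 := by
    simp only [Tg, Tg', Phi, qf, Dn, D0, D1, Matrix.mulVec, dotProduct, Fin.sum_univ_four, Matrix.cons_val', Matrix.cons_val_zero, Matrix.cons_val_one, Matrix.head_cons, Matrix.cons_val_two, Matrix.tail_cons, Matrix.cons_val_three, Matrix.empty_val', Matrix.cons_val_fin_one, Matrix.head_fin_const, Matrix.of_apply, Pi.smul_apply, smul_eq_mul]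
    linear_combination (norm := ring1) (q1 * r1 ^ 2 * s1 + 2 * q1 * r1 ^ 2 * s0 + 3 * q1 * r0 * r1 * s1 + 2 * q1 * r0 * r1 * s0 + 2 * q1 * r0 ^ 2 * s1 + q1 * r0 ^ 2 * s0 + q0 * r1 ^ 2 * s0 + q0 * r0 * r1 * s1 + q0 * r0 * r1 * s0 + q0 * r0 ^ 2 * s1 + q0 * r0 ^ 2 * s0 + p1 * r1 * s1 ^ 2 + 2 * p1 * r1 * s0 * s1 + p1 * r1 * s0 ^ 2 + 2 * p1 * r0 * s1 ^ 2 + 2 * p1 * r0 * s0 * s1 + p1 * r0 * s0 ^ 2 + p0 * r1 * s0 * s1 + p0 * r0 * s1 ^ 2 + p0 * r0 * s0 * s1 + p0 * r0 * s0 ^ 2) * two_eq_zero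
  have h1 : ((Tg p0 p1 q0 q1 r0 r1 s0 s1).mulVec (Phi r0 r1 s0 s1)) 1 = (Dn p0 p1 q0 q1 r0 r1 s0 s1 • ![0, 0, 1, 0]) 1 := by
    simp only [Tg, Tg', Phi, qf, Dn, D0, D1, Matrix.mulVec, dotProduct, Fin.sum_univ_four, Matrix.cons_val', Matrix.cons_val_zero, Matrix.cons_val_one, Matrix.head_cons, Matrix.cons_val_two, Matrix.tail_cons, Matrix.cons_val_three, Matrix.empty_val', Matrix.cons_val_fin_one, Matrix.head_fin_const, Matrix.of_apply, Pi.smul_apply, smul_eq_mul]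
    linear_combination (norm := ring1) (2 * q1 * r1 ^ 2 * s1 + 3 * q1 * r1 ^ 2 * s0 + 5 * q1 * r0 * r1 * s1 + 3 * q1 * r0 * r1 * s0 + 3 * q1 * r0 ^ 2 * s1 + q1 * r0 ^ 2 * s0 + q0 * r1 ^ 2 * s1 + q0 * r1 ^ 2 * s0 + 2 * q0 * r0 * r1 * s1 + q0 * r0 * r1 * s0 + q0 * r0 ^ 2 * s1 + 2 * p1 * r1 * s1 ^ 2 + 3 * p1 * r1 * s0 * s1 + 2 * p1 * r1 * s0 ^ 2 + 3 * p1 * r0 * s1 ^ 2 + 3 * p1 * r0 * s0 * s1 + p1 * r0 * s0 ^ 2 + p0 * r1 * s1 ^ 2 + p0 * r1 * s0 * s1 + p0 * r1 * s0 ^ 2 + p0 * r0 * s1 ^ 2 + p0 * r0 * s0 * s1) * two_eq_zero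
  have h2 : ((Tg p0 p1 q0 q1 r0 r1 s0 s1).mulVec (Phi r0 r1 s0 s1)) 2 = (Dn p0 p1 q0 q1 r0 r1 s0 s1 • ![0, 0, 1, 0]) 2 := by
    simp only [Tg, Tg', Phi, qf, Dn, D0, D1, Matrix.mulVec, dotProduct, Fin.sum_univ_four, Matrix.cons_val', Matrix.cons_val_zero, Matrix.cons_val_one, Matrix.head_cons, Matrix.cons_val_two, Matrix.tail_cons, Matrix.cons_val_three, Matrix.empty_val', Matrix.cons_val_fin_one, Matrix.head_fin_const, Matrix.of_apply, Pi.smul_apply, smul_eq_mul]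
    linear_combination (norm := ring1) (-q1 ^ 2 * r1 ^ 2 - q1 ^ 2 * r0 * r1 - q0 * q1 * r1 ^ 2 - 2 * q0 * q1 * r0 * r1 - 2 * p1 * q1 * r1 * s1 + p1 * q1 * r1 * s0 + 2 * p1 * q1 * r0 * s1 - p1 * q0 * r1 * s1 - p1 ^ 2 * s1 ^ 2 - p1 ^ 2 * s0 * s1 - p0 * q1 * r1 * s1 + p0 * q1 * r0 * s1 + p0 * q0 * r0 * s1 - p0 * p1 * s1 ^ 2 - 2 * p0 * p1 * s0 * s1) * two_eq_zero
  have h3 : ((Tg p0 p1 q0 q1 r0 r1 s0 s1).mulVec (Phi r0 r1 s0 s1)) 3 = (Dn p0 p1 q0 q1 r0 r1 s0 s1 • ![0, 0, 1, 0]) 3 := by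
    simp only [Tg, Tg', Phi, qf, Dn, D0, D1, Matrix.mulVec, dotProduct, Fin.sum_univ_four, Matrix.cons_val', Matrix.cons_val_zero, Matrix.cons_val_one, Matrix.head_cons, Matrix.cons_val_two, Matrix.tail_cons, Matrix.cons_val_three, Matrix.empty_val', Matrix.cons_val_fin_one, Matrix.head_fin_const, Matrix.of_apply, Pi.smul_apply, smul_eq_mul]
    linear_combination (norm := ring1) (2 * r1 ^ 2 * s1 ^ 2 + 4 * r1 ^ 2 * s0 * s1 + 2 * r1 ^ 2 * s0 ^ 2 + 5 * r0 * r1 * s1 ^ 2 + 6 * r0 * r1 * s0 * s1 + 2 * r0 * r1 * s0 ^ 2 + 3 * r0 ^ 2 * s1 ^ 2 + 3 * r0 ^ 2 * s0 * s1 + 2 * r0 ^ 2 * s0 ^ 2) * two_eq_zero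
  funext i
  fin_cases i
  · exact h0
  · exact h1
  · exact h2
  · exact h3

lemma TgTg' (p0 p1 q0 q1 r0 r1 s0 s1 : F8) (v : Fin 4 → F8) :
    (Tg p0 p1 q0 q1 r0 r1 s0 s1).mulVec ((Tg' p0 p1 q0 q1 r0 r1 s0 s1).mulVec v) = Dn p0 p1 q0 q1 r0 r1 s0 s1 • v := by
  have h0 : ((Tg p0 p1 q0 q1 r0 r1 s0 s1).mulVec ((Tg' p0 p1 q0 q1 r0 r1 s0 s1).mulVec v)) 0 = (Dn p0 p1 q0 q1 r0 r1 s0 s1 • v) 0 := by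
    simp only [Tg, Tg', Phi, qf, Dn, D0, D1, Matrix.mulVec, dotProduct, Fin.sum_univ_four, Matrix.cons_val', Matrix.cons_val_zero, Matrix.cons_val_one, Matrix.head_cons, Matrix.cons_val_two, Matrix.tail_cons, Matrix.cons_val_three, Matrix.empty_val', Matrix.cons_val_fin_one, Matrix.head_fin_const, Matrix.of_apply, Pi.smul_apply, smul_eq_mul]
    linear_combination (norm := ring1) (4 * q1 * r1 ^ 2 * s1 * v 2 + 2 * q1 * r1 ^ 2 * s0 * v 2 + 5 * q1 * r0 * r1 * s1 * v 2 + 2 * q1 * r0 * r1 * s0 * v 2 + 2 * q1 * r0 ^ 2 * s1 * v 2 + q1 * r0 ^ 2 * s0 * v 2 + 9 * q1 ^ 2 * r1 ^ 2 * v 1 + 2 * q1 ^ 2 * r1 ^ 2 * v 0 + 12 * q1 ^ 2 * r0 * r1 * v 1 + 3 * q1 ^ 2 * r0 * r1 * v 0 + 4 * q1 ^ 2 * r0 ^ 2 * v 1 + q1 ^ 2 * r0 ^ 2 * v 0 + q0 * r1 ^ 2 * s1 * v 2 + q0 * r1 ^ 2 * s0 * v 2 + 2 * q0 * r0 * r1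 * s1 * v 2 + q0 * r0 * r1 * s0 * v 2 + q0 * r0 ^ 2 * s1 * v 2 + q0 * r0 ^ 2 * s0 * v 2 + 6 * q0 * q1 * r1 ^ 2 * v 1 + q0 * q1 * r1 ^ 2 * v 0 + 10 * q0 * q1 * r0 * r1 * v 1 + q0 * q1 * r0 * r1 * v 0 + 4 * q0 * q1 * r0 ^ 2 * v 1 + q0 * q1 * r0 ^ 2 * v 0 + q0 ^ 2 * r1 ^ 2 * v 1 + 2 * q0 ^ 2 * r0 * r1 * v 1 + q0 ^ 2 * r0 ^ 2 * v 1 + 3 * p1 * r1 * s1 ^ 2 * v 2 + 3 * p1 * r1 * s0 * s1 * v 2 + p1 * r1 * s0 ^ 2 * v 2 + 2 * p1 * r0 * s1 ^ 2 * v 2 + 2 * p1 * r0 * s0 * s1 * v 2 + p1 * r0 * s0 ^ 2 * v 2 + 17 * p1 * q1 * r1 * s1 * v 1 + 5 * p1 * q1 * r1 * s1 * v 0 + 10 * p1 * q1 * r1 * s0 * v 1 + 3 * p1 * q1 * r1 * s0 * v 0 + 12 * p1 * q1 * r0 * s1 * v 1 + 4 * p1 * q1 * r0 * s1 * v 0 +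 7 * p1 * q1 * r0 * s0 * v 1 + 2 * p1 * q1 * r0 * s0 * v 0 + 4 * p1 * q1 ^ 2 * r1 * v 3 + 3 * p1 * q1 ^ 2 * r0 * v 3 + 5 * p1 * q0 * r1 * s1 * v 1 + p1 * q0 * r1 * s1 * v 0 + 5 * p1 * q0 * r1 * s0 * v 1 + 2 * p1 * q0 * r1 * s0 * v 0 + 5 * p1 * q0 * r0 * s1 * v 1 + p1 * q0 * r0 * s1 * v 0 + 4 * p1 * q0 * r0 * s0 * v 1 + 2 * p1 * q0 * r0 * s0 * v 0 + 3 * p1 * q0 * q1 * r1 * v 3 + 3 * p1 * q0 * q1 * r0 * v 3 + p1 * q0 ^ 2 * r1 * v 3 + p1 * q0 ^ 2 * r0 * v 3 + 4 * p1 ^ 2 * s1 ^ 2 * v 1 + p1 ^ 2 * s1 ^ 2 * v 0 + 4 * p1 ^ 2 * s0 * s1 * v 1 + p1 ^ 2 * s0 * s1 * v 0 + p1 ^ 2 * s0 ^ 2 * v 1 + 3 * p1 ^ 2 * q1 * s1 * v 3 + 2 * p1 ^ 2 * q1 * s0 * v 3 + p1 ^ 2 * q0 * s1 * v 3 + p1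 ^ 2 * q0 * s0 * v 3 + p0 * r1 * s1 ^ 2 * v 2 + p0 * r1 * s0 * s1 * v 2 + p0 * r0 * s1 ^ 2 * v 2 + p0 * r0 * s0 * s1 * v 2 + p0 * r0 * s0 ^ 2 * v 2 + 7 * p0 * q1 * r1 * s1 * v 1 + 2 * p0 * q1 * r1 * s1 * v 0 + 4 * p0 * q1 * r1 * s0 * v 1 + 7 * p0 * q1 * r0 * s1 * v 1 + 3 * p0 * q1 * r0 * s1 * v 0 + 4 * p0 * q1 * r0 * s0 * v 1 + 2 * p0 * q1 * r0 * s0 * v 0 + 2 * p0 * q1 ^ 2 * r1 * v 3 + 2 * p0 * q1 ^ 2 * r0 * v 3 + 2 * p0 * q0 * r1 * s1 * v 1 + 2 * p0 * q0 * r1 * s0 * v 1 + 3 * p0 * q0 * r0 * s1 * v 1 + p0 * q0 * r0 * s1 * v 0 + 2 * p0 * q0 * r0 * s0 * v 1 + 2 * p0 * q0 * r0 * s0 * v 0 + p0 * q0 * q1 * r1 * v 3 + 2 * p0 * q0 * q1 * r0 * v 3 + p0 * q0 ^ 2 * r0 * v 3 + 4 * p0 * p1 * s1 ^ 2 * v 1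 + p0 * p1 * s1 ^ 2 * v 0 + 4 * p0 * p1 * s0 * s1 * v 1 + p0 * p1 * s0 ^ 2 * v 1 + 3 * p0 * p1 * q1 * s1 * v 3 + 2 * p0 * p1 * q1 * s0 * v 3 + p0 * p1 * q0 * s1 * v 3 + p0 * p1 * q0 * s0 * v 3 + p0 ^ 2 * s1 ^ 2 * v 1 + p0 ^ 2 * s0 * s1 * v 1 + p0 ^ 2 * q1 * s1 * v 3 + p0 ^ 2 * q1 * s0 * v 3 + p0 ^ 2 * q0 * s0 * v 3) * two_eq_zero
  have h1 : ((Tg p0 p1 q0 q1 r0 r1 s0 s1).mulVec ((Tg' p0 p1 q0 q1 r0 r1 s0 s1).mulVec v)) 1 = (Dn p0 p1 q0 q1 r0 r1 s0 s1 • v) 1 := by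
    simp only [Tg, Tg', Phi, qf, Dn, D0, D1, Matrix.mulVec, dotProduct, Fin.sum_univ_four, Matrix.cons_val', Matrix.cons_val_zero, Matrix.cons_val_one, Matrix.head_cons, Matrix.cons_val_two, Matrix.tail_cons, Matrix.cons_val_three, Matrix.empty_val', Matrix.cons_val_fin_one, Matrix.head_fin_const, Matrix.of_apply, Pi.smul_apply, smul_eq_mul]
    linear_combination (norm := ring1) (7 * q1 * r1 ^ 2 * s1 * v 2 + 3 * q1 * r1 ^ 2 * s0 * v 2 + 8 * q1 * r0 * r1 * s1 * v 2 + 3 * q1 * r0 * r1 * s0 * v 2 + 3 * q1 * r0 ^ 2 * s1 * v 2 + q1 * r0 ^ 2 * s0 * v 2 + 14 * q1 ^ 2 * r1 ^ 2 * v 1 + 6 * q1 ^ 2 * r1 ^ 2 * v 0 + 17 * q1 ^ 2 * r0 * r1 * v 1 + 7 * q1 ^ 2 * r0 * r1 * v 0 + 5 * q1 ^ 2 * r0 ^ 2 * v 1 + 2 * q1 ^ 2 * r0 ^ 2 * v 0 + 3 * q0 * r1 ^ 2 * s1 * v 2 + q0 * r1 ^ 2 * s0 * v 2 + 3 * q0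 * r0 * r1 * s1 * v 2 + q0 * r0 * r1 * s0 * v 2 + q0 * r0 ^ 2 * s1 * v 2 + 11 * q0 * q1 * r1 ^ 2 * v 1 + 5 * q0 * q1 * r1 ^ 2 * v 0 + 11 * q0 * q1 * r0 * r1 * v 1 + 5 * q0 * q1 * r0 * r1 * v 0 + 3 * q0 * q1 * r0 ^ 2 * v 1 + q0 * q1 * r0 ^ 2 * v 0 + 2 * q0 ^ 2 * r1 ^ 2 * v 1 + q0 ^ 2 * r1 ^ 2 * v 0 + 2 * q0 ^ 2 * r0 * r1 * v 1 + q0 ^ 2 * r0 * r1 * v 0 + 5 * p1 * r1 * s1 ^ 2 * v 2 + 5 * p1 * r1 * s0 * s1 * v 2 + 2 * p1 * r1 * s0 ^ 2 * v 2 + 3 * p1 * r0 * s1 ^ 2 * v 2 + 3 * p1 * r0 * s0 * s1 * v 2 + p1 * r0 * s0 ^ 2 * v 2 + 27 * p1 * q1 * r1 * s1 * v 1 + 14 * p1 * q1 * r1 * s1 * v 0 + 14 * p1 * q1 * r1 * s0 * v 1 + 7 * p1 * q1 * r1 * s0 * v 0 + 16 * p1 * q1 * r0 * s1 * v 1 +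 8 * p1 * q1 * r0 * s1 * v 0 + 8 * p1 * q1 * r0 * s0 * v 1 + 4 * p1 * q1 * r0 * s0 * v 0 + 7 * p1 * q1 ^ 2 * r1 * v 3 + 4 * p1 * q1 ^ 2 * r0 * v 3 + 11 * p1 * q0 * r1 * s1 * v 1 + 6 * p1 * q0 * r1 * s1 * v 0 + 4 * p1 * q0 * r1 * s0 * v 1 + 4 * p1 * q0 * r1 * s0 * v 0 + 5 * p1 * q0 * r0 * s1 * v 1 + 3 * p1 * q0 * r0 * s1 * v 0 + 2 * p1 * q0 * r0 * s0 * v 1 + 2 * p1 * q0 * r0 * s0 * v 0 + 6 * p1 * q0 * q1 * r1 * v 3 + 3 * p1 * q0 * q1 * r0 * v 3 + 2 * p1 * q0 ^ 2 * r1 * v 3 + p1 * q0 ^ 2 * r0 * v 3 + 5 * p1 ^ 2 * s1 ^ 2 * v 1 + 4 * p1 ^ 2 * s1 ^ 2 * v 0 + 5 * p1 ^ 2 * s0 * s1 * v 1 + 4 * p1 ^ 2 * s0 * s1 * v 0 + p1 ^ 2 * s0 ^ 2 * v 1 + p1 ^ 2 * s0 ^ 2 * v 0 + 5 * p1 ^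 2 * q1 * s1 * v 3 + 3 * p1 ^ 2 * q1 * s0 * v 3 + 2 * p1 ^ 2 * q0 * s1 * v 3 + p1 ^ 2 * q0 * s0 * v 3 + 2 * p0 * r1 * s1 ^ 2 * v 2 + 2 * p0 * r1 * s0 * s1 * v 2 + p0 * r1 * s0 ^ 2 * v 2 + p0 * r0 * s1 ^ 2 * v 2 + p0 * r0 * s0 * s1 * v 2 + 13 * p0 * q1 * r1 * s1 * v 1 + 7 * p0 * q1 * r1 * s1 * v 0 + 6 * p0 * q1 * r1 * s0 * v 1 + 3 * p0 * q1 * r1 * s0 * v 0 + 6 * p0 * q1 * r0 * s1 * v 1 + 5 * p0 * q1 * r0 * s1 * v 0 + 3 * p0 * q1 * r0 * s0 * v 1 + 2 * p0 * q1 * r0 * s0 * v 0 + 4 * p0 * q1 ^ 2 * r1 * v 3 + 2 * p0 * q1 ^ 2 * r0 * v 3 + 5 * p0 * q0 * r1 * s1 * v 1 + 3 * p0 * q0 * r1 * s1 * v 0 + 2 * p0 * q0 * r1 * s0 * v 1 + 2 * p0 * q0 * r1 * s0 * v 0 + 2 * p0 * q0 * r0 * s1 * v 1 + 2 * p0 *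 q0 * r0 * s1 * v 0 + 3 * p0 * q0 * q1 * r1 * v 3 + p0 * q0 * q1 * r0 * v 3 + p0 * q0 ^ 2 * r1 * v 3 + 5 * p0 * p1 * s1 ^ 2 * v 1 + 4 * p0 * p1 * s1 ^ 2 * v 0 + 4 * p0 * p1 * s0 * s1 * v 1 + 4 * p0 * p1 * s0 * s1 * v 0 + p0 * p1 * s0 ^ 2 * v 1 + p0 * p1 * s0 ^ 2 * v 0 + 5 * p0 * p1 * q1 * s1 * v 3 + 3 * p0 * p1 * q1 * s0 * v 3 + 2 * p0 * p1 * q0 * s1 * v 3 + p0 * p1 * q0 * s0 * v 3 + p0 ^ 2 * s1 ^ 2 * v 1 + p0 ^ 2 * s1 ^ 2 * v 0 + p0 ^ 2 * s0 * s1 * v 1 + p0 ^ 2 * s0 * s1 * v 0 + 2 * p0 ^ 2 * q1 * s1 * v 3 + p0 ^ 2 * q1 * s0 * v 3 + p0 ^ 2 * q0 * s1 * v 3) * two_eq_zero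
  have h2 : ((Tg p0 p1 q0 q1 r0 r1 s0 s1).mulVec ((Tg' p0 p1 q0 q1 r0 r1 s0 s1).mulVec v)) 2 = (Dn p0 p1 q0 q1 r0 r1 s0 s1 • v) 2 := by
    simp only [Tg, Tg', Phi, qf, Dn, D0, D1, Matrix.mulVec, dotProduct, Fin.sum_univ_four, Matrix.cons_val', Matrix.cons_val_zero, Matrix.cons_val_one, Matrix.head_cons, Matrix.cons_val_two, Matrix.tail_cons, Matrix.cons_val_three, Matrix.empty_val', Matrix.cons_val_fin_one, Matrix.head_fin_const, Matrix.of_apply, Pi.smul_apply, smul_eq_mul]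
    linear_combination (norm := ring1) (-q1 ^ 2 * r1 ^ 2 * v 2 - q1 ^ 2 * r0 * r1 * v 2 - q0 * q1 * r1 ^ 2 * v 2 - 2 * q0 * q1 * r0 * r1 * v 2 + 3 * p1 * q1 * r1 * s1 * v 2 + p1 * q1 * r1 * s0 * v 2 + 2 * p1 * q1 * r0 * s1 * v 2 + 18 * p1 * q1 ^ 2 * r1 * v 1 + 7 * p1 * q1 ^ 2 * r1 * v 0 + 11 * p1 * q1 ^ 2 * r0 * v 1 + 4 * p1 * q1 ^ 2 * r0 * v 0 + p1 * q0 * r1 * s1 * v 2 + 15 * p1 * q0 * q1 * r1 * v 1 + 6 * p1 * q0 * q1 * r1 * v 0 + 9 * p1 * q0 * q1 * r0 * v 1 + 3 * p1 * q0 * q1 * r0 * v 0 + 5 * p1 * q0 ^ 2 * r1 * v 1 + 2 * p1 * q0 ^ 2 * r1 * v 0 + 3 * p1 * q0 ^ 2 * r0 * v 1 + p1 * q0 ^ 2 * r0 * v 0 - p1 ^ 2 * s1 ^ 2 * v 2 - p1 ^ 2 * s0 * s1 * v 2 + 12 * p1 ^ 2 * q1 * s1 * v 1 + 7 * p1 ^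 2 * q1 * s1 * v 0 + 5 * p1 ^ 2 * q1 * s0 * v 1 + 3 * p1 ^ 2 * q1 * s0 * v 0 + 7 * p1 ^ 2 * q1 ^ 2 * v 3 + 5 * p1 ^ 2 * q0 * s1 * v 1 + 3 * p1 ^ 2 * q0 * s1 * v 0 + 2 * p1 ^ 2 * q0 * s0 * v 1 + 2 * p1 ^ 2 * q0 * s0 * v 0 + 6 * p1 ^ 2 * q0 * q1 * v 3 + 2 * p1 ^ 2 * q0 ^ 2 * v 3 + 2 * p0 * q1 * r1 * s1 * v 2 + p0 * q1 * r0 * s1 * v 2 + 10 * p0 * q1 ^ 2 * r1 * v 1 + 4 * p0 * q1 ^ 2 * r1 * v 0 + 6 * p0 * q1 ^ 2 * r0 * v 1 + 3 * p0 * q1 ^ 2 * r0 * v 0 + p0 * q0 * r1 * s1 * v 2 + p0 * q0 * r0 * s1 * v 2 + 10 * p0 * q0 * q1 * r1 * v 1 + 4 * p0 * q0 * q1 * r1 * v 0 + 6 * p0 * q0 * q1 * r0 * v 1 + 3 * p0 * q0 * q1 * r0 * v 0 + 3 * p0 * q0 ^ 2 * r1 * v 1 + p0 * q0 ^ 2 *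 r1 * v 0 + 2 * p0 * q0 ^ 2 * r0 * v 1 + 2 * p0 * q0 ^ 2 * r0 * v 0 - p0 * p1 * s1 ^ 2 * v 2 - 2 * p0 * p1 * s0 * s1 * v 2 + 14 * p0 * p1 * q1 * s1 * v 1 + 8 * p0 * p1 * q1 * s1 * v 0 + 6 * p0 * p1 * q1 * s0 * v 1 + 3 * p0 * p1 * q1 * s0 * v 0 + 8 * p0 * p1 * q1 ^ 2 * v 3 + 7 * p0 * p1 * q0 * s1 * v 1 + 4 * p0 * p1 * q0 * s1 * v 0 + 3 * p0 * p1 * q0 * s0 * v 1 + 2 * p0 * p1 * q0 * s0 * v 0 + 7 * p0 * p1 * q0 * q1 * v 3 + 2 * p0 * p1 * q0 ^ 2 * v 3 + 6 * p0 ^ 2 * q1 * s1 * v 1 + 3 * p0 ^ 2 * q1 * s1 * v 0 + 3 * p0 ^ 2 * q1 * s0 * v 1 + p0 ^ 2 * q1 * s0 * v 0 + 3 * p0 ^ 2 * q1 ^ 2 * v 3 + 3 * p0 ^ 2 * q0 * s1 * v 1 + 2 * p0 ^ 2 * q0 * s1 * v 0 + p0 ^ 2 * q0 * s0 * v 1 +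 2 * p0 ^ 2 * q0 * s0 * v 0 + 3 * p0 ^ 2 * q0 * q1 * v 3 + 2 * p0 ^ 2 * q0 ^ 2 * v 3) * two_eq_zero
  have h3 : ((Tg p0 p1 q0 q1 r0 r1 s0 s1).mulVec ((Tg' p0 p1 q0 q1 r0 r1 s0 s1).mulVec v)) 3 = (Dn p0 p1 q0 q1 r0 r1 s0 s1 • v) 3 := by
    simp only [Tg, Tg', Phi, qf, Dn, D0, D1, Matrix.mulVec, dotProduct, Fin.sum_univ_four, Matrix.cons_val', Matrix.cons_val_zero, Matrix.cons_val_one, Matrix.head_cons, Matrix.cons_val_two, Matrix.tail_cons, Matrix.cons_val_three, Matrix.empty_val', Matrix.cons_val_fin_one, Matrix.head_fin_const, Matrix.of_apply, Pi.smul_apply, smul_eq_mul]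
    linear_combination (norm := ring1) (7 * r1 ^ 2 * s1 ^ 2 * v 2 + 6 * r1 ^ 2 * s0 * s1 * v 2 + 2 * r1 ^ 2 * s0 ^ 2 * v 2 + 8 * r0 * r1 * s1 ^ 2 * v 2 + 7 * r0 * r1 * s0 * s1 * v 2 + 2 * r0 * r1 * s0 ^ 2 * v 2 + 3 * r0 ^ 2 * s1 ^ 2 * v 2 + 3 * r0 ^ 2 * s0 * s1 * v 2 + 2 * r0 ^ 2 * s0 ^ 2 * v 2 + 18 * q1 * r1 ^ 2 * s1 * v 1 + 7 * q1 * r1 ^ 2 * s1 * v 0 + 8 * q1 * r1 ^ 2 * s0 * v 1 + 3 * q1 * r1 ^ 2 * s0 * v 0 + 21 * q1 * r0 * r1 * s1 * v 1 + 8 * q1 * r0 * r1 * s1 * v 0 + 11 * q1 * r0 * r1 * s0 * v 1 + 4 * q1 * r0 * r1 * s0 * v 0 + 8 * q1 * r0 ^ 2 * s1 * v 1 + 3 * q1 * r0 ^ 2 * s1 * v 0 + 5 * q1 * r0 ^ 2 * s0 * v 1 + 2 * q1 * r0 ^ 2 * s0 * v 0 - q1 ^ 2 * r1 ^ 2 *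 v 3 - q1 ^ 2 * r0 * r1 * v 3 + 7 * q0 * r1 ^ 2 * s1 * v 1 + 3 * q0 * r1 ^ 2 * s1 * v 0 + 3 * q0 * r1 ^ 2 * s0 * v 1 + 2 * q0 * r1 ^ 2 * s0 * v 0 + 8 * q0 * r0 * r1 * s1 * v 1 + 3 * q0 * r0 * r1 * s1 * v 0 + 4 * q0 * r0 * r1 * s0 * v 1 + 2 * q0 * r0 * r1 * s0 * v 0 + 3 * q0 * r0 ^ 2 * s1 * v 1 + q0 * r0 ^ 2 * s1 * v 0 + 2 * q0 * r0 ^ 2 * s0 * v 1 + 2 * q0 * r0 ^ 2 * s0 * v 0 - q0 * q1 * r1 ^ 2 * v 3 - 2 * q0 * q1 * r0 * r1 * v 3 + 12 * p1 * r1 * s1 ^ 2 * v 1 + 7 * p1 * r1 * s1 ^ 2 * v 0 + 10 * p1 * r1 * s0 * s1 * v 1 + 6 * p1 * r1 * s0 * s1 * v 0 + 4 * p1 * r1 * s0 ^ 2 * v 1 + 2 * p1 * r1 * s0 ^ 2 * v 0 + 7 * p1 * r0 * s1 ^ 2 * v 1 + 4 * p1 * r0 * s1 ^ 2 * v 0 +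 7 * p1 * r0 * s0 * s1 * v 1 + 4 * p1 * r0 * s0 * s1 * v 0 + 3 * p1 * r0 * s0 ^ 2 * v 1 + p1 * r0 * s0 ^ 2 * v 0 + 3 * p1 * q1 * r1 * s1 * v 3 + p1 * q1 * r1 * s0 * v 3 + 2 * p1 * q1 * r0 * s1 * v 3 + p1 * q1 * r0 * s0 * v 3 + p1 * q0 * r1 * s1 * v 3 - p1 ^ 2 * s1 ^ 2 * v 3 - p1 ^ 2 * s0 * s1 * v 3 + 7 * p0 * r1 * s1 ^ 2 * v 1 + 4 * p0 * r1 * s1 ^ 2 * v 0 + 6 * p0 * r1 * s0 * s1 * v 1 + 3 * p0 * r1 * s0 * s1 * v 0 + 2 * p0 * r1 * s0 ^ 2 * v 1 + p0 * r1 * s0 ^ 2 * v 0 + 4 * p0 * r0 * s1 ^ 2 * v 1 + 3 * p0 * r0 * s1 ^ 2 * v 0 + 4 * p0 * r0 * s0 * s1 * v 1 + 3 * p0 * r0 * s0 * s1 * v 0 + p0 * r0 * s0 ^ 2 * v 1 + 2 * p0 * r0 * s0 ^ 2 * v 0 + 2 * p0 * q1 * r1 * s1 * v 3 + p0 * q1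 * r0 * s1 * v 3 + p0 * q1 * r0 * s0 * v 3 - p0 * p1 * s1 ^ 2 * v 3 - 2 * p0 * p1 * s0 * s1 * v 3) * two_eq_zero
  funext i
  fin_cases i
  · exact h0
  · exact h1
  · exact h2
  · exact h3

lemma Tg'Tg (p0 p1 q0 q1 r0 r1 s0 s1 : F8) (v : Fin 4 → F8) :
    (Tg' p0 p1 q0 q1 r0 r1 s0 s1).mulVec ((Tg p0 p1 q0 q1 r0 r1 s0 s1).mulVec v) = Dn p0 p1 q0 q1 r0 r1 s0 s1 • v := by
  have h0 : ((Tg' p0 p1 q0 q1 r0 r1 s0 s1).mulVec ((Tg p0 p1 q0 q1 r0 r1 s0 s1).mulVec v)) 0 = (Dn p0 p1 q0 q1 r0 r1 s0 s1 • v) 0 := by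
    simp only [Tg, Tg', Phi, qf, Dn, D0, D1, Matrix.mulVec, dotProduct, Fin.sum_univ_four, Matrix.cons_val', Matrix.cons_val_zero, Matrix.cons_val_one, Matrix.head_cons, Matrix.cons_val_two, Matrix.tail_cons, Matrix.cons_val_three, Matrix.empty_val', Matrix.cons_val_fin_one, Matrix.head_fin_const, Matrix.of_apply, Pi.smul_apply, smul_eq_mul]
    linear_combination (norm := ring1) (4 * q1 ^ 2 * r1 * s1 * v 3 + 2 * q1 ^ 2 * r1 * s0 * v 3 + 9 * q1 ^ 2 * r1 ^ 2 * v 1 + 2 * q1 ^ 2 * r1 ^ 2 * v 0 + 3 * q1 ^ 2 * r0 * s1 * v 3 + 2 * q1 ^ 2 * r0 * s0 * v 3 + 12 * q1 ^ 2 * r0 * r1 * v 1 + 3 * q1 ^ 2 * r0 * r1 * v 0 + 4 * q1 ^ 2 * r0 ^ 2 * v 1 + q1 ^ 2 * r0 ^ 2 * v 0 + 3 * q0 * q1 * r1 * s1 * v 3 + q0 * q1 * r1 * s0 * v 3 + 6 * q0 * q1 * r1 ^ 2 * v 1 + q0 * q1 * r1 ^ 2 * v 0 + 3 * q0 * q1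 * r0 * s1 * v 3 + 2 * q0 * q1 * r0 * s0 * v 3 + 10 * q0 * q1 * r0 * r1 * v 1 + q0 * q1 * r0 * r1 * v 0 + 4 * q0 * q1 * r0 ^ 2 * v 1 + q0 * q1 * r0 ^ 2 * v 0 + q0 ^ 2 * r1 * s1 * v 3 + q0 ^ 2 * r1 ^ 2 * v 1 + q0 ^ 2 * r0 * s1 * v 3 + q0 ^ 2 * r0 * s0 * v 3 + 2 * q0 ^ 2 * r0 * r1 * v 1 + q0 ^ 2 * r0 ^ 2 * v 1 + 3 * p1 * q1 * s1 ^ 2 * v 3 + 3 * p1 * q1 * s0 * s1 * v 3 + p1 * q1 * s0 ^ 2 * v 3 + 17 * p1 * q1 * r1 * s1 * v 1 + 5 * p1 * q1 * r1 * s1 * v 0 + 7 * p1 * q1 * r1 * s0 * v 1 + 2 * p1 * q1 * r1 * s0 * v 0 + 4 * p1 * q1 * r1 ^ 2 * v 2 + 12 * p1 * q1 * r0 * s1 * v 1 + 4 * p1 * q1 * r0 * s1 * v 0 + 7 * p1 * q1 * r0 * s0 * v 1 + 3 * p1 * q1 * r0 * s0 * v 0 + 5 * p1 * q1 * r0 *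 r1 * v 2 + 2 * p1 * q1 * r0 ^ 2 * v 2 + p1 * q0 * s1 ^ 2 * v 3 + p1 * q0 * s0 * s1 * v 3 + 5 * p1 * q0 * r1 * s1 * v 1 + p1 * q0 * r1 * s1 * v 0 + 2 * p1 * q0 * r1 * s0 * v 1 + p1 * q0 * r1 ^ 2 * v 2 + 5 * p1 * q0 * r0 * s1 * v 1 + p1 * q0 * r0 * s1 * v 0 + 3 * p1 * q0 * r0 * s0 * v 1 + p1 * q0 * r0 * s0 * v 0 + 2 * p1 * q0 * r0 * r1 * v 2 + p1 * q0 * r0 ^ 2 * v 2 + 4 * p1 ^ 2 * s1 ^ 2 * v 1 + p1 ^ 2 * s1 ^ 2 * v 0 + 4 * p1 ^ 2 * s0 * s1 * v 1 + p1 ^ 2 * s0 * s1 * v 0 + p1 ^ 2 * s0 ^ 2 * v 1 + 3 * p1 ^ 2 * r1 * s1 * v 2 + p1 ^ 2 * r1 * s0 * v 2 + 2 * p1 ^ 2 * r0 * s1 * v 2 + p1 ^ 2 * r0 * s0 * v 2 + 2 * p0 * q1 * s1 ^ 2 * v 3 + 2 * p0 * q1 * s0 * s1 * v 3 + p0 *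 q1 * s0 ^ 2 * v 3 + 10 * p0 * q1 * r1 * s1 * v 1 + 3 * p0 * q1 * r1 * s1 * v 0 + 4 * p0 * q1 * r1 * s0 * v 1 + 2 * p0 * q1 * r1 ^ 2 * v 2 + 7 * p0 * q1 * r0 * s1 * v 1 + 2 * p0 * q1 * r0 * s1 * v 0 + 4 * p0 * q1 * r0 * s0 * v 1 + 2 * p0 * q1 * r0 * s0 * v 0 + 2 * p0 * q1 * r0 * r1 * v 2 + p0 * q1 * r0 ^ 2 * v 2 + p0 * q0 * s1 ^ 2 * v 3 + p0 * q0 * s0 * s1 * v 3 + p0 * q0 * s0 ^ 2 * v 3 + 5 * p0 * q0 * r1 * s1 * v 1 + 2 * p0 * q0 * r1 * s1 * v 0 + 2 * p0 * q0 * r1 * s0 * v 1 + p0 * q0 * r1 ^ 2 * v 2 + 4 * p0 * q0 * r0 * s1 * v 1 + 2 * p0 * q0 * r0 * s1 * v 0 + 2 * p0 * q0 * r0 * s0 * v 1 + 2 * p0 * q0 * r0 * s0 * v 0 + p0 * q0 * r0 * r1 * v 2 + p0 * q0 * r0 ^ 2 * v 2 + 4 * p0 * p1 * s1 ^ 2 *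 v 1 + p0 * p1 * s1 ^ 2 * v 0 + 4 * p0 * p1 * s0 * s1 * v 1 + p0 * p1 * s0 ^ 2 * v 1 + 3 * p0 * p1 * r1 * s1 * v 2 + p0 * p1 * r1 * s0 * v 2 + 2 * p0 * p1 * r0 * s1 * v 2 + p0 * p1 * r0 * s0 * v 2 + p0 ^ 2 * s1 ^ 2 * v 1 + p0 ^ 2 * s0 * s1 * v 1 + p0 ^ 2 * r1 * s1 * v 2 + p0 ^ 2 * r0 * s1 * v 2 + p0 ^ 2 * r0 * s0 * v 2) * two_eq_zero
  have h1 : ((Tg' p0 p1 q0 q1 r0 r1 s0 s1).mulVec ((Tg p0 p1 q0 q1 r0 r1 s0 s1).mulVec v)) 1 = (Dn p0 p1 q0 q1 r0 r1 s0 s1 • v) 1 := by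
    simp only [Tg, Tg', Phi, qf, Dn, D0, D1, Matrix.mulVec, dotProduct, Fin.sum_univ_four, Matrix.cons_val', Matrix.cons_val_zero, Matrix.cons_val_one, Matrix.head_cons, Matrix.cons_val_two, Matrix.tail_cons, Matrix.cons_val_three, Matrix.empty_val', Matrix.cons_val_fin_one, Matrix.head_fin_const, Matrix.of_apply, Pi.smul_apply, smul_eq_mul]
    linear_combination (norm := ring1) (7 * q1 ^ 2 * r1 * s1 * v 3 + 4 * q1 ^ 2 * r1 * s0 * v 3 + 14 * q1 ^ 2 * r1 ^ 2 * v 1 + 6 * q1 ^ 2 * r1 ^ 2 * v 0 + 4 * q1 ^ 2 * r0 * s1 * v 3 + 2 * q1 ^ 2 * r0 * s0 * v 3 + 17 * q1 ^ 2 * r0 * r1 * v 1 + 7 * q1 ^ 2 * r0 * r1 * v 0 + 5 * q1 ^ 2 * r0 ^ 2 * v 1 + 2 * q1 ^ 2 * r0 ^ 2 * v 0 + 6 * q0 * q1 * r1 * s1 * v 3 + 3 * q0 * q1 * r1 * s0 * v 3 + 11 * q0 * q1 * r1 ^ 2 * v 1 + 5 * q0 * q1 * r1 ^ 2 * v 0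 + 3 * q0 * q1 * r0 * s1 * v 3 + q0 * q1 * r0 * s0 * v 3 + 11 * q0 * q1 * r0 * r1 * v 1 + 5 * q0 * q1 * r0 * r1 * v 0 + 3 * q0 * q1 * r0 ^ 2 * v 1 + q0 * q1 * r0 ^ 2 * v 0 + 2 * q0 ^ 2 * r1 * s1 * v 3 + q0 ^ 2 * r1 * s0 * v 3 + 2 * q0 ^ 2 * r1 ^ 2 * v 1 + q0 ^ 2 * r1 ^ 2 * v 0 + q0 ^ 2 * r0 * s1 * v 3 + 2 * q0 ^ 2 * r0 * r1 * v 1 + q0 ^ 2 * r0 * r1 * v 0 + 5 * p1 * q1 * s1 ^ 2 * v 3 + 5 * p1 * q1 * s0 * s1 * v 3 + 2 * p1 * q1 * s0 ^ 2 * v 3 + 27 * p1 * q1 * r1 * s1 * v 1 + 14 * p1 * q1 * r1 * s1 * v 0 + 13 * p1 * q1 * r1 * s0 * v 1 + 7 * p1 * q1 * r1 * s0 * v 0 + 7 * p1 * q1 * r1 ^ 2 * v 2 + 16 * p1 * q1 * r0 * s1 * v 1 + 8 * p1 * q1 * r0 * s1 * v 0 + 6 * p1 * q1 * r0 * s0 *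 v 1 + 5 * p1 * q1 * r0 * s0 * v 0 + 8 * p1 * q1 * r0 * r1 * v 2 + 3 * p1 * q1 * r0 ^ 2 * v 2 + 2 * p1 * q0 * s1 ^ 2 * v 3 + 2 * p1 * q0 * s0 * s1 * v 3 + p1 * q0 * s0 ^ 2 * v 3 + 11 * p1 * q0 * r1 * s1 * v 1 + 6 * p1 * q0 * r1 * s1 * v 0 + 5 * p1 * q0 * r1 * s0 * v 1 + 3 * p1 * q0 * r1 * s0 * v 0 + 3 * p1 * q0 * r1 ^ 2 * v 2 + 5 * p1 * q0 * r0 * s1 * v 1 + 3 * p1 * q0 * r0 * s1 * v 0 + 2 * p1 * q0 * r0 * s0 * v 1 + 2 * p1 * q0 * r0 * s0 * v 0 + 3 * p1 * q0 * r0 * r1 * v 2 + p1 * q0 * r0 ^ 2 * v 2 + 5 * p1 ^ 2 * s1 ^ 2 * v 1 + 4 * p1 ^ 2 * s1 ^ 2 * v 0 + 5 * p1 ^ 2 * s0 * s1 * v 1 + 4 * p1 ^ 2 * s0 * s1 * v 0 + p1 ^ 2 * s0 ^ 2 * v 1 + p1 ^ 2 * s0 ^ 2 * v 0 + 5 * p1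 ^ 2 * r1 * s1 * v 2 + 2 * p1 ^ 2 * r1 * s0 * v 2 + 3 * p1 ^ 2 * r0 * s1 * v 2 + p1 ^ 2 * r0 * s0 * v 2 + 3 * p0 * q1 * s1 ^ 2 * v 3 + 3 * p0 * q1 * s0 * s1 * v 3 + p0 * q1 * s0 ^ 2 * v 3 + 14 * p0 * q1 * r1 * s1 * v 1 + 7 * p0 * q1 * r1 * s1 * v 0 + 6 * p0 * q1 * r1 * s0 * v 1 + 3 * p0 * q1 * r1 * s0 * v 0 + 3 * p0 * q1 * r1 ^ 2 * v 2 + 8 * p0 * q1 * r0 * s1 * v 1 + 4 * p0 * q1 * r0 * s1 * v 0 + 3 * p0 * q1 * r0 * s0 * v 1 + 2 * p0 * q1 * r0 * s0 * v 0 + 3 * p0 * q1 * r0 * r1 * v 2 + p0 * q1 * r0 ^ 2 * v 2 + p0 * q0 * s1 ^ 2 * v 3 + p0 * q0 * s0 * s1 * v 3 + 4 * p0 * q0 * r1 * s1 * v 1 + 4 * p0 * q0 * r1 * s1 * v 0 + 2 * p0 * q0 * r1 * s0 * v 1 + 2 * p0 * q0 * r1 * s0 * v 0 + p0 * q0 *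 r1 ^ 2 * v 2 + 2 * p0 * q0 * r0 * s1 * v 1 + 2 * p0 * q0 * r0 * s1 * v 0 + p0 * q0 * r0 * r1 * v 2 + 5 * p0 * p1 * s1 ^ 2 * v 1 + 4 * p0 * p1 * s1 ^ 2 * v 0 + 4 * p0 * p1 * s0 * s1 * v 1 + 4 * p0 * p1 * s0 * s1 * v 0 + p0 * p1 * s0 ^ 2 * v 1 + p0 * p1 * s0 ^ 2 * v 0 + 5 * p0 * p1 * r1 * s1 * v 2 + 2 * p0 * p1 * r1 * s0 * v 2 + 3 * p0 * p1 * r0 * s1 * v 2 + p0 * p1 * r0 * s0 * v 2 + p0 ^ 2 * s1 ^ 2 * v 1 + p0 ^ 2 * s1 ^ 2 * v 0 + p0 ^ 2 * s0 * s1 * v 1 + p0 ^ 2 * s0 * s1 * v 0 + 2 * p0 ^ 2 * r1 * s1 * v 2 + p0 ^ 2 * r1 * s0 * v 2 + p0 ^ 2 * r0 * s1 * v 2) * two_eq_zero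
  have h2 : ((Tg' p0 p1 q0 q1 r0 r1 s0 s1).mulVec ((Tg p0 p1 q0 q1 r0 r1 s0 s1).mulVec v)) 2 = (Dn p0 p1 q0 q1 r0 r1 s0 s1 • v) 2 := by
    simp only [Tg, Tg', Phi, qf, Dn, D0, D1, Matrix.mulVec, dotProduct, Fin.sum_univ_four, Matrix.cons_val', Matrix.cons_val_zero, Matrix.cons_val_one, Matrix.head_cons, Matrix.cons_val_two, Matrix.tail_cons, Matrix.cons_val_three, Matrix.empty_val', Matrix.cons_val_fin_one, Matrix.head_fin_const, Matrix.of_apply, Pi.smul_apply, smul_eq_mul]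
    linear_combination (norm := ring1) (7 * q1 ^ 2 * s1 ^ 2 * v 3 + 8 * q1 ^ 2 * s0 * s1 * v 3 + 3 * q1 ^ 2 * s0 ^ 2 * v 3 + 18 * q1 ^ 2 * r1 * s1 * v 1 + 7 * q1 ^ 2 * r1 * s1 * v 0 + 10 * q1 ^ 2 * r1 * s0 * v 1 + 4 * q1 ^ 2 * r1 * s0 * v 0 - q1 ^ 2 * r1 ^ 2 * v 2 + 11 * q1 ^ 2 * r0 * s1 * v 1 + 4 * q1 ^ 2 * r0 * s1 * v 0 + 6 * q1 ^ 2 * r0 * s0 * v 1 + 3 * q1 ^ 2 * r0 * s0 * v 0 - q1 ^ 2 * r0 * r1 * v 2 + 6 * q0 * q1 * s1 ^ 2 * v 3 + 7 * q0 * q1 * s0 * s1 * v 3 + 3 * q0 * q1 * s0 ^ 2 * v 3 + 15 * q0 * q1 * r1 * s1 * v 1 + 6 * q0 * q1 * r1 * s1 * v 0 + 10 * q0 * q1 * r1 * s0 * v 1 + 4 * q0 * q1 * r1 * s0 * v 0 - q0 * q1 * r1 ^ 2 * v 2 + 9 * q0 * q1 * r0 * s1 * v 1 + 3 * q0 * q1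 * r0 * s1 * v 0 + 6 * q0 * q1 * r0 * s0 * v 1 + 3 * q0 * q1 * r0 * s0 * v 0 - 2 * q0 * q1 * r0 * r1 * v 2 + 2 * q0 ^ 2 * s1 ^ 2 * v 3 + 2 * q0 ^ 2 * s0 * s1 * v 3 + 2 * q0 ^ 2 * s0 ^ 2 * v 3 + 5 * q0 ^ 2 * r1 * s1 * v 1 + 2 * q0 ^ 2 * r1 * s1 * v 0 + 3 * q0 ^ 2 * r1 * s0 * v 1 + q0 ^ 2 * r1 * s0 * v 0 + 3 * q0 ^ 2 * r0 * s1 * v 1 + q0 ^ 2 * r0 * s1 * v 0 + 2 * q0 ^ 2 * r0 * s0 * v 1 + 2 * q0 ^ 2 * r0 * s0 * v 0 + 12 * p1 * q1 * s1 ^ 2 * v 1 + 7 * p1 * q1 * s1 ^ 2 * v 0 + 14 * p1 * q1 * s0 * s1 * v 1 + 8 * p1 * q1 * s0 * s1 * v 0 + 6 * p1 * q1 * s0 ^ 2 * v 1 + 3 * p1 * q1 * s0 ^ 2 * v 0 + 3 * p1 * q1 * r1 * s1 * v 2 + 2 * p1 * q1 * r1 * s0 * v 2 + 2 * p1 * q1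 * r0 * s1 * v 2 + p1 * q1 * r0 * s0 * v 2 + 5 * p1 * q0 * s1 ^ 2 * v 1 + 3 * p1 * q0 * s1 ^ 2 * v 0 + 7 * p1 * q0 * s0 * s1 * v 1 + 4 * p1 * q0 * s0 * s1 * v 0 + 3 * p1 * q0 * s0 ^ 2 * v 1 + 2 * p1 * q0 * s0 ^ 2 * v 0 + p1 * q0 * r1 * s1 * v 2 + p1 * q0 * r1 * s0 * v 2 + p1 * q0 * r0 * s0 * v 2 - p1 ^ 2 * s1 ^ 2 * v 2 - p1 ^ 2 * s0 * s1 * v 2 + 5 * p0 * q1 * s1 ^ 2 * v 1 + 3 * p0 * q1 * s1 ^ 2 * v 0 + 6 * p0 * q1 * s0 * s1 * v 1 + 3 * p0 * q1 * s0 * s1 * v 0 + 3 * p0 * q1 * s0 ^ 2 * v 1 + p0 * q1 * s0 ^ 2 * v 0 + p0 * q1 * r1 * s1 * v 2 + 2 * p0 * q0 * s1 ^ 2 * v 1 + 2 * p0 * q0 * s1 ^ 2 * v 0 + 3 * p0 * q0 * s0 * s1 * v 1 + 2 * p0 * q0 * s0 * s1 * v 0 + p0 * q0 * s0 ^ 2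 * v 1 + 2 * p0 * q0 * s0 ^ 2 * v 0 - p0 * p1 * s1 ^ 2 * v 2 - 2 * p0 * p1 * s0 * s1 * v 2) * two_eq_zero
  have h3 : ((Tg' p0 p1 q0 q1 r0 r1 s0 s1).mulVec ((Tg p0 p1 q0 q1 r0 r1 s0 s1).mulVec v)) 3 = (Dn p0 p1 q0 q1 r0 r1 s0 s1 • v) 3 := by
    simp only [Tg, Tg', Phi, qf, Dn, D0, D1, Matrix.mulVec, dotProduct, Fin.sum_univ_four, Matrix.cons_val', Matrix.cons_val_zero, Matrix.cons_val_one, Matrix.head_cons, Matrix.cons_val_two, Matrix.tail_cons, Matrix.cons_val_three, Matrix.empty_val', Matrix.cons_val_fin_one, Matrix.head_fin_const, Matrix.of_apply, Pi.smul_apply, smul_eq_mul]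
    linear_combination (norm := ring1) (-q1 ^ 2 * r1 ^ 2 * v 3 - q1 ^ 2 * r0 * r1 * v 3 - q0 * q1 * r1 ^ 2 * v 3 - 2 * q0 * q1 * r0 * r1 * v 3 + 3 * p1 * q1 * r1 * s1 * v 3 + 2 * p1 * q1 * r1 * s0 * v 3 + 18 * p1 * q1 * r1 ^ 2 * v 1 + 7 * p1 * q1 * r1 ^ 2 * v 0 + 2 * p1 * q1 * r0 * s1 * v 3 + p1 * q1 * r0 * s0 * v 3 + 21 * p1 * q1 * r0 * r1 * v 1 + 8 * p1 * q1 * r0 * r1 * v 0 + 8 * p1 * q1 * r0 ^ 2 * v 1 + 3 * p1 * q1 * r0 ^ 2 * v 0 + p1 * q0 * r1 * s1 * v 3 + 7 * p1 * q0 * r1 ^ 2 * v 1 + 3 * p1 * q0 * r1 ^ 2 * v 0 + 8 * p1 * q0 * r0 * r1 * v 1 + 3 * p1 * q0 * r0 * r1 * v 0 + 3 * p1 * q0 * r0 ^ 2 * v 1 + p1 * q0 * r0 ^ 2 * v 0 - p1 ^ 2 * s1 ^ 2 * v 3 - p1 ^ 2 * s0 * s1 * v 3 + 12 * p1 ^ 2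 * r1 * s1 * v 1 + 7 * p1 ^ 2 * r1 * s1 * v 0 + 7 * p1 ^ 2 * r1 * s0 * v 1 + 4 * p1 ^ 2 * r1 * s0 * v 0 + 7 * p1 ^ 2 * r1 ^ 2 * v 2 + 7 * p1 ^ 2 * r0 * s1 * v 1 + 4 * p1 ^ 2 * r0 * s1 * v 0 + 4 * p1 ^ 2 * r0 * s0 * v 1 + 3 * p1 ^ 2 * r0 * s0 * v 0 + 8 * p1 ^ 2 * r0 * r1 * v 2 + 3 * p1 ^ 2 * r0 ^ 2 * v 2 + p0 * q1 * r1 * s1 * v 3 + 8 * p0 * q1 * r1 ^ 2 * v 1 + 3 * p0 * q1 * r1 ^ 2 * v 0 + p0 * q1 * r0 * s1 * v 3 + p0 * q1 * r0 * s0 * v 3 + 11 * p0 * q1 * r0 * r1 * v 1 + 4 * p0 * q1 * r0 * r1 * v 0 + 5 * p0 * q1 * r0 ^ 2 * v 1 + 2 * p0 * q1 * r0 ^ 2 * v 0 + 3 * p0 * q0 * r1 ^ 2 * v 1 + 2 * p0 * q0 * r1 ^ 2 * v 0 + 4 * p0 * q0 * r0 * r1 * v 1 + 2 * p0 * q0 *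 r0 * r1 * v 0 + 2 * p0 * q0 * r0 ^ 2 * v 1 + 2 * p0 * q0 * r0 ^ 2 * v 0 - p0 * p1 * s1 ^ 2 * v 3 - 2 * p0 * p1 * s0 * s1 * v 3 + 10 * p0 * p1 * r1 * s1 * v 1 + 6 * p0 * p1 * r1 * s1 * v 0 + 6 * p0 * p1 * r1 * s0 * v 1 + 3 * p0 * p1 * r1 * s0 * v 0 + 6 * p0 * p1 * r1 ^ 2 * v 2 + 7 * p0 * p1 * r0 * s1 * v 1 + 4 * p0 * p1 * r0 * s1 * v 0 + 4 * p0 * p1 * r0 * s0 * v 1 + 3 * p0 * p1 * r0 * s0 * v 0 + 7 * p0 * p1 * r0 * r1 * v 2 + 3 * p0 * p1 * r0 ^ 2 * v 2 + 4 * p0 ^ 2 * r1 * s1 * v 1 + 2 * p0 ^ 2 * r1 * s1 * v 0 + 2 * p0 ^ 2 * r1 * s0 * v 1 + p0 ^ 2 * r1 * s0 * v 0 + 2 * p0 ^ 2 * r1 ^ 2 * v 2 + 3 * p0 ^ 2 * r0 * s1 * v 1 + p0 ^ 2 * r0 * s1 * v 0 + p0 ^ 2 * r0 * s0 * v 1 +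 2 * p0 ^ 2 * r0 * s0 * v 0 + 2 * p0 ^ 2 * r0 * r1 * v 2 + 2 * p0 ^ 2 * r0 ^ 2 * v 2) * two_eq_zero
  funext i
  fin_cases i
  · exact h0
  · exact h1
  · exact h2
  · exact h3

lemma qf_Tg (p0 p1 q0 q1 r0 r1 s0 s1 : F8) (v : Fin 4 → F8) :
    qf ((Tg p0 p1 q0 q1 r0 r1 s0 s1).mulVec v) = Dn p0 p1 q0 q1 r0 r1 s0 s1 * qf v := by
  simp only [Tg, Tg', Phi, qf, Dn, D0, D1, Matrix.mulVec, dotProduct, Fin.sum_univ_four, Matrix.cons_val', Matrix.cons_val_zero, Matrix.cons_val_one, Matrix.head_cons, Matrix.cons_val_two, Matrix.tail_cons, Matrix.cons_val_three, Matrix.empty_val', Matrix.cons_val_fin_one, Matrix.head_fin_const, Matrix.of_apply, Pi.smul_apply, smul_eq_mul]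
  linear_combination (norm := ring1) (3 * q1 ^ 2 * s1 ^ 2 * v 3 ^ 2 + 4 * q1 ^ 2 * s0 * s1 * v 3 ^ 2 + q1 ^ 2 * s0 ^ 2 * v 3 ^ 2 + 16 * q1 ^ 2 * r1 * s1 * v 1 * v 3 + 6 * q1 ^ 2 * r1 * s1 * v 0 * v 3 + 11 * q1 ^ 2 * r1 * s0 * v 1 * v 3 + 4 * q1 ^ 2 * r1 * s0 * v 0 * v 3 + q1 ^ 2 * r1 ^ 2 * v 2 * v 3 + 23 * q1 ^ 2 * r1 ^ 2 * v 1 ^ 2 + 17 * q1 ^ 2 * r1 ^ 2 * v 0 * v 1 + 2 * q1 ^ 2 * r1 ^ 2 * v 0 ^ 2 + 10 * q1 ^ 2 * r0 * s1 * v 1 * v 3 + 4 * q1 ^ 2 * r0 * s1 * v 0 * v 3 + 7 * q1 ^ 2 * r0 * s0 * v 1 * v 3 + 2 * q1 ^ 2 * r0 * s0 * v 0 * v 3 + q1 ^ 2 * r0 * r1 * v 2 * v 3 + 29 * q1 ^ 2 * r0 * r1 * v 1 ^ 2 + 22 * q1 ^ 2 * r0 * r1 * v 0 * v 1 + 3 *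 q1 ^ 2 * r0 * r1 * v 0 ^ 2 + 9 * q1 ^ 2 * r0 ^ 2 * v 1 ^ 2 + 7 * q1 ^ 2 * r0 ^ 2 * v 0 * v 1 + q1 ^ 2 * r0 ^ 2 * v 0 ^ 2 + 2 * q0 * q1 * s1 ^ 2 * v 3 ^ 2 + 3 * q0 * q1 * s0 * s1 * v 3 ^ 2 + q0 * q1 * s0 ^ 2 * v 3 ^ 2 + 11 * q0 * q1 * r1 * s1 * v 1 * v 3 + 4 * q0 * q1 * r1 * s1 * v 0 * v 3 + 9 * q0 * q1 * r1 * s0 * v 1 * v 3 + 3 * q0 * q1 * r1 * s0 * v 0 * v 3 + q0 * q1 * r1 ^ 2 * v 2 * v 3 + 17 * q0 * q1 * r1 ^ 2 * v 1 ^ 2 + 12 * q0 * q1 * r1 ^ 2 * v 0 * v 1 + q0 * q1 * r1 ^ 2 * v 0 ^ 2 + 7 * q0 * q1 * r0 * s1 * v 1 * v 3 + 3 * q0 * q1 * r0 * s1 * v 0 * v 3 + 6 * q0 * q1 * r0 * s0 * v 1 * v 3 + 2 * q0 * q1 * r0 * s0 * v 0 * v 3 + 2 * q0 * q1 * r0 *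 r1 * v 2 * v 3 + 21 * q0 * q1 * r0 * r1 * v 1 ^ 2 + 16 * q0 * q1 * r0 * r1 * v 0 * v 1 + q0 * q1 * r0 * r1 * v 0 ^ 2 + 7 * q0 * q1 * r0 ^ 2 * v 1 ^ 2 + 6 * q0 * q1 * r0 ^ 2 * v 0 * v 1 + q0 * q1 * r0 ^ 2 * v 0 ^ 2 + q0 ^ 2 * r1 * s0 * v 1 * v 3 + 3 * q0 ^ 2 * r1 ^ 2 * v 1 ^ 2 + 2 * q0 ^ 2 * r1 ^ 2 * v 0 * v 1 + q0 ^ 2 * r0 * s0 * v 1 * v 3 + 4 * q0 ^ 2 * r0 * r1 * v 1 ^ 2 + 3 * q0 ^ 2 * r0 * r1 * v 0 * v 1 + q0 ^ 2 * r0 ^ 2 * v 1 ^ 2 + q0 ^ 2 * r0 ^ 2 * v 0 * v 1 + 9 * p1 * q1 * s1 ^ 2 * v 1 * v 3 + 6 * p1 * q1 * s1 ^ 2 * v 0 * v 3 + 12 * p1 * q1 * s0 * s1 * v 1 * v 3 + 8 * p1 * q1 * s0 * s1 * v 0 * v 3 + 2 * p1 * q1 * s0 ^ 2 * v 1 * v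 3 + 2 * p1 * q1 * s0 ^ 2 * v 0 * v 3 + 10 * p1 * q1 * r1 * s1 * v 2 * v 3 + 15 * p1 * q1 * r1 * s1 * v 1 ^ 2 + 17 * p1 * q1 * r1 * s1 * v 0 * v 1 + 2 * p1 * q1 * r1 * s1 * v 0 ^ 2 + 6 * p1 * q1 * r1 * s0 * v 2 * v 3 + 12 * p1 * q1 * r1 * s0 * v 1 ^ 2 + 13 * p1 * q1 * r1 * s0 * v 0 * v 1 + 2 * p1 * q1 * r1 * s0 * v 0 ^ 2 + 16 * p1 * q1 * r1 ^ 2 * v 1 * v 2 + 6 * p1 * q1 * r1 ^ 2 * v 0 * v 2 + 6 * p1 * q1 * r0 * s1 * v 2 * v 3 + 10 * p1 * q1 * r0 * s1 * v 1 ^ 2 + 12 * p1 * q1 * r0 * s1 * v 0 * v 1 + 2 * p1 * q1 * r0 * s1 * v 0 ^ 2 + 4 * p1 * q1 * r0 * s0 * v 2 * v 3 + 8 * p1 * q1 * r0 * s0 * v 1 ^ 2 + 5 * p1 * q1 * r0 * s0 * v 0 * v 1 + 21 * p1 * q1 * r0 * r1 * v 1 * v 2 + 8 * p1 * q1 * r0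 * r1 * v 0 * v 2 + 5 * p1 * q1 * r0 ^ 2 * v 1 * v 2 + 2 * p1 * q1 * r0 ^ 2 * v 0 * v 2 + 3 * p1 * q0 * s1 ^ 2 * v 1 * v 3 + 2 * p1 * q0 * s1 ^ 2 * v 0 * v 3 + 5 * p1 * q0 * s0 * s1 * v 1 * v 3 + 3 * p1 * q0 * s0 * s1 * v 0 * v 3 + p1 * q0 * s0 ^ 2 * v 1 * v 3 + p1 * q0 * s0 ^ 2 * v 0 * v 3 + 4 * p1 * q0 * r1 * s1 * v 2 * v 3 + 5 * p1 * q0 * r1 * s1 * v 1 ^ 2 + 5 * p1 * q0 * r1 * s1 * v 0 * v 1 + 3 * p1 * q0 * r1 * s0 * v 2 * v 3 + 4 * p1 * q0 * r1 * s0 * v 1 ^ 2 + 4 * p1 * q0 * r1 * s0 * v 0 * v 1 + 6 * p1 * q0 * r1 ^ 2 * v 1 * v 2 + 2 * p1 * q0 * r1 ^ 2 * v 0 * v 2 + 3 * p1 * q0 * r0 * s1 * v 2 * v 3 + 3 * p1 * q0 * r0 * s1 * v 1 ^ 2 + 4 * p1 * q0 * r0 * s1 * v 0 * v 1 + 2 *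 p1 * q0 * r0 * s0 * v 2 * v 3 + 3 * p1 * q0 * r0 * s0 * v 1 ^ 2 + 2 * p1 * q0 * r0 * s0 * v 0 * v 1 + 8 * p1 * q0 * r0 * r1 * v 1 * v 2 + 3 * p1 * q0 * r0 * r1 * v 0 * v 2 + 2 * p1 * q0 * r0 ^ 2 * v 1 * v 2 + p1 * q0 * r0 ^ 2 * v 0 * v 2 + p1 ^ 2 * s1 ^ 2 * v 2 * v 3 + 8 * p1 ^ 2 * s1 ^ 2 * v 1 ^ 2 + 10 * p1 ^ 2 * s1 ^ 2 * v 0 * v 1 + 2 * p1 ^ 2 * s1 ^ 2 * v 0 ^ 2 + p1 ^ 2 * s0 * s1 * v 2 * v 3 + 10 * p1 ^ 2 * s0 * s1 * v 1 ^ 2 + 13 * p1 ^ 2 * s0 * s1 * v 0 * v 1 + 3 * p1 ^ 2 * s0 * s1 * v 0 ^ 2 + 3 * p1 ^ 2 * s0 ^ 2 * v 1 ^ 2 + 4 * p1 ^ 2 * s0 ^ 2 * v 0 * v 1 + p1 ^ 2 * s0 ^ 2 * v 0 ^ 2 + 9 * p1 ^ 2 * r1 * s1 * v 1 * v 2 +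 6 * p1 ^ 2 * r1 * s1 * v 0 * v 2 + 6 * p1 ^ 2 * r1 * s0 * v 1 * v 2 + 4 * p1 ^ 2 * r1 * s0 * v 0 * v 2 + 3 * p1 ^ 2 * r1 ^ 2 * v 2 ^ 2 + 6 * p1 ^ 2 * r0 * s1 * v 1 * v 2 + 4 * p1 ^ 2 * r0 * s1 * v 0 * v 2 + 4 * p1 ^ 2 * r0 * s0 * v 1 * v 2 + 2 * p1 ^ 2 * r0 * s0 * v 0 * v 2 + 4 * p1 ^ 2 * r0 * r1 * v 2 ^ 2 + p1 ^ 2 * r0 ^ 2 * v 2 ^ 2 + 3 * p0 * q1 * s1 ^ 2 * v 1 * v 3 + 2 * p0 * q1 * s1 ^ 2 * v 0 * v 3 + 4 * p0 * q1 * s0 * s1 * v 1 * v 3 + 3 * p0 * q1 * s0 * s1 * v 0 * v 3 + p0 * q1 * s0 ^ 2 * v 0 * v 3 + 4 * p0 * q1 * r1 * s1 * v 2 * v 3 + 3 * p0 * q1 * r1 * s1 * v 1 ^ 2 + 4 * p0 * q1 * r1 * s1 * v 0 * v 1 + 3 * p0 * q1 * r1 * s0 * v 2 * v 3 + 2 *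 p0 * q1 * r1 * s0 * v 1 ^ 2 + 4 * p0 * q1 * r1 * s0 * v 0 * v 1 + 5 * p0 * q1 * r1 ^ 2 * v 1 * v 2 + 2 * p0 * q1 * r1 ^ 2 * v 0 * v 2 + 3 * p0 * q1 * r0 * s1 * v 2 * v 3 + 2 * p0 * q1 * r0 * s1 * v 1 ^ 2 + 3 * p0 * q1 * r0 * s1 * v 0 * v 1 + 2 * p0 * q1 * r0 * s0 * v 2 * v 3 + 2 * p0 * q1 * r0 * s0 * v 1 ^ 2 + p0 * q1 * r0 * s0 * v 0 * v 1 + 8 * p0 * q1 * r0 * r1 * v 1 * v 2 + 3 * p0 * q1 * r0 * r1 * v 0 * v 2 + 2 * p0 * q1 * r0 ^ 2 * v 1 * v 2 + p0 * q1 * r0 ^ 2 * v 0 * v 2 + p0 * q0 * s1 ^ 2 * v 1 * v 3 + 2 * p0 * q0 * s0 * s1 * v 1 * v 3 + 2 * p0 * q0 * r1 * s1 * v 2 * v 3 + p0 * q0 * r1 * s1 * v 1 ^ 2 - 3 * p0 * q0 * r1 * s1 * v 0 * v 1 - 2 * p0 * q0 * r1 * s1 * v 0 ^ 2 + p0 *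 q0 * r1 * s0 * v 2 * v 3 + p0 * q0 * r1 * s0 * v 1 ^ 2 - p0 * q0 * r1 * s0 * v 0 ^ 2 + 2 * p0 * q0 * r1 ^ 2 * v 1 * v 2 + p0 * q0 * r0 * s1 * v 2 * v 3 + p0 * q0 * r0 * s1 * v 1 ^ 2 - p0 * q0 * r0 * s1 * v 0 * v 1 - p0 * q0 * r0 * s1 * v 0 ^ 2 + 2 * p0 * q0 * r0 * s0 * v 2 * v 3 - p0 * q0 * r0 * s0 * v 0 * v 1 - 2 * p0 * q0 * r0 * s0 * v 0 ^ 2 + 3 * p0 * q0 * r0 * r1 * v 1 * v 2 + p0 * q0 * r0 ^ 2 * v 1 * v 2 + p0 * p1 * s1 ^ 2 * v 2 * v 3 + 6 * p0 * p1 * s1 ^ 2 * v 1 ^ 2 + 7 * p0 * p1 * s1 ^ 2 * v 0 * v 1 + p0 * p1 * s1 ^ 2 * v 0 ^ 2 + 2 * p0 * p1 * s0 * s1 * v 2 * v 3 + 6 * p0 * p1 * s0 * s1 * v 1 ^ 2 + 9 * p0 * p1 * s0 * s1 * v 0 * v 1 + p0 * p1 * s0 * s1 * v 0 ^ 2 +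 2 * p0 * p1 * s0 ^ 2 * v 1 ^ 2 + 3 * p0 * p1 * s0 ^ 2 * v 0 * v 1 + p0 * p1 * s0 ^ 2 * v 0 ^ 2 + 6 * p0 * p1 * r1 * s1 * v 1 * v 2 + 4 * p0 * p1 * r1 * s1 * v 0 * v 2 + 4 * p0 * p1 * r1 * s0 * v 1 * v 2 + 3 * p0 * p1 * r1 * s0 * v 0 * v 2 + 2 * p0 * p1 * r1 ^ 2 * v 2 ^ 2 + 5 * p0 * p1 * r0 * s1 * v 1 * v 2 + 3 * p0 * p1 * r0 * s1 * v 0 * v 2 + 3 * p0 * p1 * r0 * s0 * v 1 * v 2 + 2 * p0 * p1 * r0 * s0 * v 0 * v 2 + 3 * p0 * p1 * r0 * r1 * v 2 ^ 2 + p0 * p1 * r0 ^ 2 * v 2 ^ 2 + p0 ^ 2 * s1 ^ 2 * v 1 ^ 2 + p0 ^ 2 * s1 ^ 2 * v 0 * v 1 + p0 ^ 2 * s0 * s1 * v 1 ^ 2 + 2 * p0 ^ 2 * s0 * s1 * v 0 * v 1 - p0 ^ 2 * r1 * s1 * v 1 * v 2) * two_eq_zero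

lemma qf_Tg' (p0 p1 q0 q1 r0 r1 s0 s1 : F8) (v : Fin 4 → F8) :
    qf ((Tg' p0 p1 q0 q1 r0 r1 s0 s1).mulVec v) = Dn p0 p1 q0 q1 r0 r1 s0 s1 * qf v := by
  simp only [Tg, Tg', Phi, qf, Dn, D0, D1, Matrix.mulVec, dotProduct, Fin.sum_univ_four, Matrix.cons_val', Matrix.cons_val_zero, Matrix.cons_val_one, Matrix.head_cons, Matrix.cons_val_two, Matrix.tail_cons, Matrix.cons_val_three, Matrix.empty_val', Matrix.cons_val_fin_one, Matrix.head_fin_const, Matrix.of_apply, Pi.smul_apply, smul_eq_mul]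
  linear_combination (norm := ring1) (3 * r1 ^ 2 * s1 ^ 2 * v 2 ^ 2 + 2 * r1 ^ 2 * s0 * s1 * v 2 ^ 2 + 4 * r0 * r1 * s1 ^ 2 * v 2 ^ 2 + 3 * r0 * r1 * s0 * s1 * v 2 ^ 2 + r0 ^ 2 * s1 ^ 2 * v 2 ^ 2 + r0 ^ 2 * s0 * s1 * v 2 ^ 2 + 16 * q1 * r1 ^ 2 * s1 * v 1 * v 2 + 6 * q1 * r1 ^ 2 * s1 * v 0 * v 2 + 5 * q1 * r1 ^ 2 * s0 * v 1 * v 2 + 2 * q1 * r1 ^ 2 * s0 * v 0 * v 2 + 21 * q1 * r0 * r1 * s1 * v 1 * v 2 + 8 * q1 * r0 * r1 * s1 * v 0 * v 2 + 8 * q1 * r0 * r1 * s0 * v 1 * v 2 + 3 * q1 * r0 * r1 * s0 * v 0 * v 2 + 5 * q1 * r0 ^ 2 * s1 * v 1 * v 2 + 2 * q1 * r0 ^ 2 * s1 * v 0 * v 2 + 2 * q1 * r0 ^ 2 * s0 * v 1 * v 2 + q1 * r0 ^ 2 * s0 * v 0 * v 2 + q1 ^ 2 * r1 ^ 2 * v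 2 * v 3 + 23 * q1 ^ 2 * r1 ^ 2 * v 1 ^ 2 + 17 * q1 ^ 2 * r1 ^ 2 * v 0 * v 1 + 2 * q1 ^ 2 * r1 ^ 2 * v 0 ^ 2 + q1 ^ 2 * r0 * r1 * v 2 * v 3 + 29 * q1 ^ 2 * r0 * r1 * v 1 ^ 2 + 22 * q1 ^ 2 * r0 * r1 * v 0 * v 1 + 3 * q1 ^ 2 * r0 * r1 * v 0 ^ 2 + 9 * q1 ^ 2 * r0 ^ 2 * v 1 ^ 2 + 7 * q1 ^ 2 * r0 ^ 2 * v 0 * v 1 + q1 ^ 2 * r0 ^ 2 * v 0 ^ 2 + 6 * q0 * r1 ^ 2 * s1 * v 1 * v 2 + 2 * q0 * r1 ^ 2 * s1 * v 0 * v 2 + 2 * q0 * r1 ^ 2 * s0 * v 1 * v 2 + 8 * q0 * r0 * r1 * s1 * v 1 * v 2 + 3 * q0 * r0 * r1 * s1 * v 0 * v 2 + 3 * q0 * r0 * r1 * s0 * v 1 * v 2 + 2 * q0 * r0 ^ 2 * s1 * v 1 * v 2 + q0 * r0 ^ 2 * s1 * v 0 * v 2 + q0 * r0 ^ 2 * s0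 * v 1 * v 2 + q0 * q1 * r1 ^ 2 * v 2 * v 3 + 17 * q0 * q1 * r1 ^ 2 * v 1 ^ 2 + 12 * q0 * q1 * r1 ^ 2 * v 0 * v 1 + q0 * q1 * r1 ^ 2 * v 0 ^ 2 + 2 * q0 * q1 * r0 * r1 * v 2 * v 3 + 21 * q0 * q1 * r0 * r1 * v 1 ^ 2 + 16 * q0 * q1 * r0 * r1 * v 0 * v 1 + q0 * q1 * r0 * r1 * v 0 ^ 2 + 7 * q0 * q1 * r0 ^ 2 * v 1 ^ 2 + 6 * q0 * q1 * r0 ^ 2 * v 0 * v 1 + q0 * q1 * r0 ^ 2 * v 0 ^ 2 + 3 * q0 ^ 2 * r1 ^ 2 * v 1 ^ 2 + 2 * q0 ^ 2 * r1 ^ 2 * v 0 * v 1 + 4 * q0 ^ 2 * r0 * r1 * v 1 ^ 2 + 3 * q0 ^ 2 * r0 * r1 * v 0 * v 1 + q0 ^ 2 * r0 ^ 2 * v 1 ^ 2 + q0 ^ 2 * r0 ^ 2 * v 0 * v 1 + 9 * p1 * r1 * s1 ^ 2 * v 1 * v 2 + 6 * p1 * r1 * s1 ^ 2 * v 0 *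 v 2 + 6 * p1 * r1 * s0 * s1 * v 1 * v 2 + 4 * p1 * r1 * s0 * s1 * v 0 * v 2 - p1 * r1 * s0 ^ 2 * v 1 * v 2 + 6 * p1 * r0 * s1 ^ 2 * v 1 * v 2 + 4 * p1 * r0 * s1 ^ 2 * v 0 * v 2 + 5 * p1 * r0 * s0 * s1 * v 1 * v 2 + 3 * p1 * r0 * s0 * s1 * v 0 * v 2 + 10 * p1 * q1 * r1 * s1 * v 2 * v 3 + 15 * p1 * q1 * r1 * s1 * v 1 ^ 2 + 17 * p1 * q1 * r1 * s1 * v 0 * v 1 + 2 * p1 * q1 * r1 * s1 * v 0 ^ 2 + 4 * p1 * q1 * r1 * s0 * v 2 * v 3 + 3 * p1 * q1 * r1 * s0 * v 1 ^ 2 + 4 * p1 * q1 * r1 * s0 * v 0 * v 1 + 6 * p1 * q1 * r0 * s1 * v 2 * v 3 + 10 * p1 * q1 * r0 * s1 * v 1 ^ 2 + 12 * p1 * q1 * r0 * s1 * v 0 * v 1 + 2 * p1 * q1 * r0 * s1 * v 0 ^ 2 + 3 * p1 * q1 * r0 * s0 * v 2 * v 3 + 2 * p1 * q1 * r0 * s0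 * v 1 ^ 2 + 3 * p1 * q1 * r0 * s0 * v 0 * v 1 + 16 * p1 * q1 ^ 2 * r1 * v 1 * v 3 + 6 * p1 * q1 ^ 2 * r1 * v 0 * v 3 + 10 * p1 * q1 ^ 2 * r0 * v 1 * v 3 + 4 * p1 * q1 ^ 2 * r0 * v 0 * v 3 + 4 * p1 * q0 * r1 * s1 * v 2 * v 3 + 5 * p1 * q0 * r1 * s1 * v 1 ^ 2 + 5 * p1 * q0 * r1 * s1 * v 0 * v 1 + 2 * p1 * q0 * r1 * s0 * v 2 * v 3 + p1 * q0 * r1 * s0 * v 1 ^ 2 - 3 * p1 * q0 * r1 * s0 * v 0 * v 1 - 2 * p1 * q0 * r1 * s0 * v 0 ^ 2 + 3 * p1 * q0 * r0 * s1 * v 2 * v 3 + 3 * p1 * q0 * r0 * s1 * v 1 ^ 2 + 4 * p1 * q0 * r0 * s1 * v 0 * v 1 + p1 * q0 * r0 * s0 * v 2 * v 3 + p1 * q0 * r0 * s0 * v 1 ^ 2 - p1 * q0 * r0 * s0 * v 0 * v 1 - p1 * q0 * r0 * s0 * v 0 ^ 2 + 11 * p1 * q0 * q1 * r1 * v 1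 * v 3 + 4 * p1 * q0 * q1 * r1 * v 0 * v 3 + 7 * p1 * q0 * q1 * r0 * v 1 * v 3 + 3 * p1 * q0 * q1 * r0 * v 0 * v 3 + p1 ^ 2 * s1 ^ 2 * v 2 * v 3 + 8 * p1 ^ 2 * s1 ^ 2 * v 1 ^ 2 + 10 * p1 ^ 2 * s1 ^ 2 * v 0 * v 1 + 2 * p1 ^ 2 * s1 ^ 2 * v 0 ^ 2 + p1 ^ 2 * s0 * s1 * v 2 * v 3 + 6 * p1 ^ 2 * s0 * s1 * v 1 ^ 2 + 7 * p1 ^ 2 * s0 * s1 * v 0 * v 1 + p1 ^ 2 * s0 * s1 * v 0 ^ 2 + p1 ^ 2 * s0 ^ 2 * v 1 ^ 2 + p1 ^ 2 * s0 ^ 2 * v 0 * v 1 + 9 * p1 ^ 2 * q1 * s1 * v 1 * v 3 + 6 * p1 ^ 2 * q1 * s1 * v 0 * v 3 + 3 * p1 ^ 2 * q1 * s0 * v 1 * v 3 + 2 * p1 ^ 2 * q1 * s0 * v 0 * v 3 + 3 * p1 ^ 2 * q1 ^ 2 * v 3 ^ 2 + 3 * p1 ^ 2 * q0 * s1 * v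 1 * v 3 + 2 * p1 ^ 2 * q0 * s1 * v 0 * v 3 + p1 ^ 2 * q0 * s0 * v 1 * v 3 + 2 * p1 ^ 2 * q0 * q1 * v 3 ^ 2 + 6 * p0 * r1 * s1 ^ 2 * v 1 * v 2 + 4 * p0 * r1 * s1 ^ 2 * v 0 * v 2 + 4 * p0 * r1 * s0 * s1 * v 1 * v 2 + 3 * p0 * r1 * s0 * s1 * v 0 * v 2 + 4 * p0 * r0 * s1 ^ 2 * v 1 * v 2 + 2 * p0 * r0 * s1 ^ 2 * v 0 * v 2 + 3 * p0 * r0 * s0 * s1 * v 1 * v 2 + 2 * p0 * r0 * s0 * s1 * v 0 * v 2 + 6 * p0 * q1 * r1 * s1 * v 2 * v 3 + 12 * p0 * q1 * r1 * s1 * v 1 ^ 2 + 13 * p0 * q1 * r1 * s1 * v 0 * v 1 + 2 * p0 * q1 * r1 * s1 * v 0 ^ 2 + 3 * p0 * q1 * r1 * s0 * v 2 * v 3 + 2 * p0 * q1 * r1 * s0 * v 1 ^ 2 + 4 * p0 * q1 * r1 * s0 * v 0 * v 1 + 4 * p0 * q1 * r0 * s1 * v 2 * v 3 + 8 * p0 *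 q1 * r0 * s1 * v 1 ^ 2 + 5 * p0 * q1 * r0 * s1 * v 0 * v 1 + 2 * p0 * q1 * r0 * s0 * v 2 * v 3 + 2 * p0 * q1 * r0 * s0 * v 1 ^ 2 + p0 * q1 * r0 * s0 * v 0 * v 1 + 11 * p0 * q1 ^ 2 * r1 * v 1 * v 3 + 4 * p0 * q1 ^ 2 * r1 * v 0 * v 3 + 7 * p0 * q1 ^ 2 * r0 * v 1 * v 3 + 2 * p0 * q1 ^ 2 * r0 * v 0 * v 3 + 3 * p0 * q0 * r1 * s1 * v 2 * v 3 + 4 * p0 * q0 * r1 * s1 * v 1 ^ 2 + 4 * p0 * q0 * r1 * s1 * v 0 * v 1 + p0 * q0 * r1 * s0 * v 2 * v 3 + p0 * q0 * r1 * s0 * v 1 ^ 2 - p0 * q0 * r1 * s0 * v 0 ^ 2 + 2 * p0 * q0 * r0 * s1 * v 2 * v 3 + 3 * p0 * q0 * r0 * s1 * v 1 ^ 2 + 2 * p0 * q0 * r0 * s1 * v 0 * v 1 + 2 * p0 * q0 * r0 * s0 * v 2 * v 3 - p0 * q0 * r0 * s0 * v 0 * v 1 - 2 * p0 * q0 * r0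 * s0 * v 0 ^ 2 + 9 * p0 * q0 * q1 * r1 * v 1 * v 3 + 3 * p0 * q0 * q1 * r1 * v 0 * v 3 + 6 * p0 * q0 * q1 * r0 * v 1 * v 3 + 2 * p0 * q0 * q1 * r0 * v 0 * v 3 + p0 * q0 ^ 2 * r1 * v 1 * v 3 + p0 * q0 ^ 2 * r0 * v 1 * v 3 + p0 * p1 * s1 ^ 2 * v 2 * v 3 + 10 * p0 * p1 * s1 ^ 2 * v 1 ^ 2 + 13 * p0 * p1 * s1 ^ 2 * v 0 * v 1 + 3 * p0 * p1 * s1 ^ 2 * v 0 ^ 2 + 2 * p0 * p1 * s0 * s1 * v 2 * v 3 + 6 * p0 * p1 * s0 * s1 * v 1 ^ 2 + 9 * p0 * p1 * s0 * s1 * v 0 * v 1 + p0 * p1 * s0 * s1 * v 0 ^ 2 + p0 * p1 * s0 ^ 2 * v 1 ^ 2 + 2 * p0 * p1 * s0 ^ 2 * v 0 * v 1 + 12 * p0 * p1 * q1 * s1 * v 1 * v 3 + 8 * p0 * p1 * q1 * s1 * v 0 * v 3 + 4 * p0 * p1 * q1 * s0 * v 1 * v 3 + 3 * p0 * p1 *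 q1 * s0 * v 0 * v 3 + 4 * p0 * p1 * q1 ^ 2 * v 3 ^ 2 + 5 * p0 * p1 * q0 * s1 * v 1 * v 3 + 3 * p0 * p1 * q0 * s1 * v 0 * v 3 + 2 * p0 * p1 * q0 * s0 * v 1 * v 3 + 3 * p0 * p1 * q0 * q1 * v 3 ^ 2 + 3 * p0 ^ 2 * s1 ^ 2 * v 1 ^ 2 + 4 * p0 ^ 2 * s1 ^ 2 * v 0 * v 1 + p0 ^ 2 * s1 ^ 2 * v 0 ^ 2 + 2 * p0 ^ 2 * s0 * s1 * v 1 ^ 2 + 3 * p0 ^ 2 * s0 * s1 * v 0 * v 1 + p0 ^ 2 * s0 * s1 * v 0 ^ 2 + 2 * p0 ^ 2 * q1 * s1 * v 1 * v 3 + 2 * p0 ^ 2 * q1 * s1 * v 0 * v 3 + p0 ^ 2 * q1 * s0 * v 0 * v 3 + p0 ^ 2 * q1 ^ 2 * v 3 ^ 2 + p0 ^ 2 * q0 * s1 * v 1 * v 3 + p0 ^ 2 * q0 * s1 * v 0 * v 3 + p0 ^ 2 * q0 * q1 * v 3 ^ 2) * two_eq_zero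

lemma qf_Phi (p0 p1 q0 q1 : F8) : qf (Phi p0 p1 q0 q1) = 0 := by
  simp only [Tg, Tg', Phi, qf, Dn, D0, D1, Matrix.mulVec, dotProduct, Fin.sum_univ_four, Matrix.cons_val', Matrix.cons_val_zero, Matrix.cons_val_one, Matrix.head_cons, Matrix.cons_val_two, Matrix.tail_cons, Matrix.cons_val_three, Matrix.empty_val', Matrix.cons_val_fin_one, Matrix.head_fin_const, Matrix.of_apply, Pi.smul_apply, smul_eq_mul]
  linear_combination (norm := ring1) (p0 * p1 * q1 ^ 2 + 2 * p0 * p1 * q0 * q1 + p0 ^ 2 * q1 ^ 2 + p0 ^ 2 * q0 * q1) * two_eq_zero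

lemma propor (p0 p1 q0 q1 r0 r1 s0 s1 : F8)
    (hD0 : D0 p0 p1 q0 q1 r0 r1 s0 s1 = 0) (hD1 : D1 p0 p1 q0 q1 r0 r1 s0 s1 = 0) :
    (q0 ^ 2 + q0 * q1 + q1 ^ 2) • Phi r0 r1 s0 s1 = (s0 ^ 2 + s0 * s1 + s1 ^ 2) • Phi p0 p1 q0 q1 := by
  simp only [D0, D1] at hD0 hD1
  have h0 : ((q0 ^ 2 + q0 * q1 + q1 ^ 2) • Phi r0 r1 s0 s1) 0 = ((s0 ^ 2 + s0 * s1 + s1 ^ 2) • Phi p0 p1 q0 q1) 0 := by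
    simp only [Tg, Tg', Phi, qf, Dn, D0, D1, Matrix.mulVec, dotProduct, Fin.sum_univ_four, Matrix.cons_val', Matrix.cons_val_zero, Matrix.cons_val_one, Matrix.head_cons, Matrix.cons_val_two, Matrix.tail_cons, Matrix.cons_val_three, Matrix.empty_val', Matrix.cons_val_fin_one, Matrix.head_fin_const, Matrix.of_apply, Pi.smul_apply, smul_eq_mul]
    linear_combination (norm := ring1) (q1 * s0 + q0 * s1 + q0 * s0) * hD0 + (q1 * s1 + q1 * s0 + q0 * s1) * hD1 + (-q1 ^ 2 * r1 * s0 - q0 * q1 * r1 * s1 - q0 * q1 * r1 * s0 - p1 * q1 * s1 ^ 2 - 2 * p1 * q1 * s0 * s1 - p1 * q1 * s0 ^ 2 - p1 * q0 * s1 ^ 2 - p1 * q0 * s0 * s1 - p0 * q1 * s1 ^ 2 - p0 * q1 * s0 * s1 - p0 * q1 * s0 ^ 2 - p0 * q0 * s1 ^ 2 - p0 * q0 * s0 * s1 - p0 * q0 * s0 ^ 2) * two_eq_zero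
  have h1 : ((q0 ^ 2 + q0 * q1 + q1 ^ 2) • Phi r0 r1 s0 s1) 1 = ((s0 ^ 2 + s0 * s1 + s1 ^ 2) • Phi p0 p1 q0 q1) 1 := by
    simp only [Tg, Tg', Phi, qf, Dn, D0, D1, Matrix.mulVec, dotProduct, Fin.sum_univ_four, Matrix.cons_val', Matrix.cons_val_zero, Matrix.cons_val_one, Matrix.head_cons, Matrix.cons_val_two, Matrix.tail_cons, Matrix.cons_val_three, Matrix.empty_val', Matrix.cons_val_fin_one, Matrix.head_fin_const, Matrix.of_apply, Pi.smul_apply, smul_eq_mul]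
    linear_combination (norm := ring1) (q1 * s1 + q1 * s0 + q0 * s1) * hD0 + (q1 * s1 + q0 * s0) * hD1 + (-q1 ^ 2 * r1 * s1 - q0 * q1 * r1 * s1 - q0 * q1 * r0 * s0 - p1 * q1 * s1 ^ 2 - p1 * q1 * s0 * s1 - p1 * q0 * s1 ^ 2 - p1 * q0 * s0 * s1 - p1 * q0 * s0 ^ 2 - p0 * q1 * s1 ^ 2 - p0 * q1 * s0 * s1 - p0 * q1 * s0 ^ 2 - p0 * q0 * s0 * s1) * two_eq_zero
  have h2 : ((q0 ^ 2 + q0 * q1 + q1 ^ 2) • Phi r0 r1 s0 s1) 2 = ((s0 ^ 2 + s0 * s1 + s1 ^ 2) • Phi p0 p1 q0 q1) 2 := by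
    simp only [Tg, Tg', Phi, qf, Dn, D0, D1, Matrix.mulVec, dotProduct, Fin.sum_univ_four, Matrix.cons_val', Matrix.cons_val_zero, Matrix.cons_val_one, Matrix.head_cons, Matrix.cons_val_two, Matrix.tail_cons, Matrix.cons_val_three, Matrix.empty_val', Matrix.cons_val_fin_one, Matrix.head_fin_const, Matrix.of_apply, Pi.smul_apply, smul_eq_mul]
    linear_combination (norm := ring1) (0) * two_eq_zero
  have h3 : ((q0 ^ 2 + q0 * q1 + q1 ^ 2) • Phi r0 r1 s0 s1) 3 = ((s0 ^ 2 + s0 * s1 + s1 ^ 2) • Phi p0 p1 q0 q1) 3 := by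
    simp only [Tg, Tg', Phi, qf, Dn, D0, D1, Matrix.mulVec, dotProduct, Fin.sum_univ_four, Matrix.cons_val', Matrix.cons_val_zero, Matrix.cons_val_one, Matrix.head_cons, Matrix.cons_val_two, Matrix.tail_cons, Matrix.cons_val_three, Matrix.empty_val', Matrix.cons_val_fin_one, Matrix.head_fin_const, Matrix.of_apply, Pi.smul_apply, smul_eq_mul]
    linear_combination (norm := ring1) (q1 * r1 + q0 * r0 + p1 * s0 + p0 * s1 + p0 * s0) * hD0 + (q1 * r0 + q0 * r1 + q0 * r0 + p1 * s1 + p1 * s0 + p0 * s1) * hD1 + (-2 * q0 * q1 * r0 * r1 - p1 * q1 * r1 * s1 - p1 * q1 * r1 * s0 - p1 * q1 * r0 * s1 - p1 * q1 * r0 * s0 - p1 * q0 * r1 * s1 - p1 * q0 * r1 * s0 - p1 * q0 * r0 * s1 - p1 * q0 * r0 * s0 - p1 ^ 2 * s1 ^ 2 - 2 * p1 ^ 2 * s0 * s1 - p1 ^ 2 * s0 ^ 2 - p0 * q1 * r1 * s1 - p0 * q1 * r1 * s0 - p0 * q1 * r0 * s1 - p0 * q0 * r1 * s1 - p0 * q0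 * r0 * s1 - p0 * q0 * r0 * s0 - 2 * p0 * p1 * s1 ^ 2 - 2 * p0 * p1 * s0 * s1 - p0 * p1 * s0 ^ 2 - p0 ^ 2 * s1 ^ 2 - p0 ^ 2 * s0 * s1 - p0 ^ 2 * s0 ^ 2) * two_eq_zero
  funext i
  fin_cases i
  · exact h0
  · exact h1
  · exact h2
  · exact h3

lemma normzero (p0 p1 q0 q1 r0 r1 s0 s1 : F8)
    (hD0 : D0 p0 p1 q0 q1 r0 r1 s0 s1 = 0) (hD1 : D1 p0 p1 q0 q1 r0 r1 s0 s1 = 0) (hq0 : q0 = 0) (hq1 : q1 = 0) :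
    (p0 ^ 2 + p0 * p1 + p1 ^ 2) * (s0 ^ 2 + s0 * s1 + s1 ^ 2) = 0 := by
  simp only [D0, D1] at hD0 hD1
  linear_combination (norm := ring1) (q1 * r1 + q0 * r0 + p1 * s0 + p0 * s1 + p0 * s0) * hD0 + (q1 * r0 + q0 * r1 + q0 * r0 + p1 * s1 + p1 * s0 + p0 * s1) * hD1 + (q1 * r1 ^ 2 + q1 * r0 * r1 + q1 * r0 ^ 2 + q0 * r1 ^ 2 + q0 * r0 * r1 + q0 * r0 ^ 2) * hq0 + (q1 * r1 ^ 2 + q1 * r0 * r1 + q1 * r0 ^ 2) * hq1 + (-q1 ^ 2 * r1 ^ 2 - q1 ^ 2 * r0 * r1 - q1 ^ 2 * r0 ^ 2 - q0 * q1 * r1 ^ 2 - 3 * q0 * q1 * r0 * r1 - q0 * q1 * r0 ^ 2 - q0 ^ 2 * r1 ^ 2 - q0 ^ 2 * r0 * r1 - q0 ^ 2 * r0 ^ 2 - p1 * q1 * r1 * s1 - p1 * q1 * r1 * s0 - p1 * q1 * r0 * s1 - p1 * q1 * r0 * s0 - p1 * q0 * r1 * s1 - p1 * q0 * r1 * s0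 - p1 * q0 * r0 * s1 - p1 * q0 * r0 * s0 - p1 ^ 2 * s0 * s1 - p0 * q1 * r1 * s1 - p0 * q1 * r1 * s0 - p0 * q1 * r0 * s1 - p0 * q0 * r1 * s1 - p0 * q0 * r0 * s1 - p0 * q0 * r0 * s0 - p0 * p1 * s1 ^ 2 - p0 * p1 * s0 * s1) * two_eq_zero

lemma aniso (x y : F8) (h : x ^ 2 + x * y + y ^ 2 = 0) : x = 0 ∧ y = 0 := by
  by_cases hy : y = 0
  · subst hy
    refine ⟨?_, rfl⟩
    have hx2 : x ^ 2 = 0 := by linear_combination h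
    exact pow_eq_zero_iff (two_ne_zero (α := ℕ)) |>.mp hx2
  · exfalso
    have hx : x ≠ 0 := by
      rintro rfl
      exact hy (pow_eq_zero_iff (two_ne_zero (α := ℕ)) |>.mp (by linear_combination h))
    have hxy : x ≠ y := by
      rintro rfl
      exact hx (pow_eq_zero_iff (two_ne_zero (α := ℕ)) |>.mp
        (by linear_combination h - x ^ 2 * two_eq_zero))
    have h3 : x ^ 3 = y ^ 3 := by linear_combination (x - y) * h
    have h7x : x ^ 7 = 1 := mul_left_cancel₀ hx (by linear_combination frob x)
    have h7y : y ^ 7 = 1 := mul_left_cancel₀ hy (by linear_combination frob y)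
    have h6 : x ^ 6 = y ^ 6 := by linear_combination (x ^ 3 + y ^ 3) * h3
    have hfin : x * y ^ 6 = y * y ^ 6 := by linear_combination h7x - h7y - x * h6
    exact hxy (mul_right_cancel₀ (pow_ne_zero 6 hy) hfin)

lemma qf_smul (c : F8) (v : Fin 4 → F8) : qf (c • v) = c ^ 2 * qf v := by
  simp only [qf, Pi.smul_apply, smul_eq_mul]; ring

lemma mem_iff (Q : Set (Projectivization F8 (Fin 4 → F8)))
    (hQ : Q = {p | p.rep 0 ^ 2 + p.rep 0 * p.rep 1 + p.rep 1 ^ 2 = p.rep 2 * p.rep 3})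
    (p : Projectivization F8 (Fin 4 → F8)) : p ∈ Q ↔ qf p.rep = 0 := by
  subst hQ; simp only [Set.mem_setOf_eq, qf, sub_eq_zero]

lemma mk_mem_iff (Q : Set (Projectivization F8 (Fin 4 → F8)))
    (hQ : Q = {p | p.rep 0 ^ 2 + p.rep 0 * p.rep 1 + p.rep 1 ^ 2 = p.rep 2 * p.rep 3})
    (v : Fin 4 → F8) (hv : v ≠ 0) : Projectivization.mk F8 v hv ∈ Q ↔ qf v = 0 := by
  rw [mem_iff Q hQ]
  obtain ⟨a, ha⟩ := Projectivization.exists_smul_eq_mk_rep F8 v hv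
  rw [← ha, Units.smul_def, qf_smul]
  constructor
  · intro h
    rcases mul_eq_zero.mp h with h | h
    · exact absurd (pow_eq_zero_iff (two_ne_zero (α := ℕ)) |>.mp h) a.ne_zero
    · exact h
  · intro h; rw [h, mul_zero]

lemma exists_param (v : Fin 4 → F8) (hv : v ≠ 0) (h : qf v = 0) :
    ∃ a0 a1 b0 b1 : F8, ¬(a0 = 0 ∧ a1 = 0 ∧ b0 = 0 ∧ b1 = 0) ∧ Phi a0 a1 b0 b1 = v := by
  simp only [qf] at h
  by_cases hz : v 2 = 0
  · have hN : v 0 ^ 2 + v 0 * v 1 + v 1 ^ 2 = 0 := by linear_combination h + v 3 * hz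
    obtain ⟨h0, h1⟩ := aniso _ _ hN
    have h3 : v 3 ≠ 0 := by
      intro h3
      apply hv; funext i; fin_cases i
      · exact h0
      · exact h1
      · exact hz
      · exact h3
    refine ⟨v 3 ^ 4, 0, 0, 0, ?_, ?_⟩
    · rintro ⟨ha, -, -, -⟩
      exact h3 (pow_eq_zero_iff (n := 4) (by norm_num) |>.mp ha)
    · have e0 : (Phi (v 3 ^ 4) 0 0 0) 0 = v 0 := by
        simp only [Phi, Matrix.cons_val_zero]; linear_combination -h0
      have e1 : (Phi (v 3 ^ 4) 0 0 0) 1 = v 1 := by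
        simp only [Phi, Matrix.cons_val_one, Matrix.head_cons, Matrix.cons_val_zero]; linear_combination -h1
      have e2 : (Phi (v 3 ^ 4) 0 0 0) 2 = v 2 := by
        simp only [Phi, Matrix.cons_val_two, Matrix.tail_cons, Matrix.head_cons]
        linear_combination -hz
      have e3 : (Phi (v 3 ^ 4) 0 0 0) 3 = v 3 := by
        simp only [Phi, Matrix.cons_val_three, Matrix.tail_cons, Matrix.head_cons]
        linear_combination frob (v 3)
      funext i; fin_cases i
      · exact e0
      · exact e1
      · exact e2
      · exact e3
  · have h7 : v 2 ^ 7 = 1 := mul_left_cancel₀ hz (by linear_combination frob (v 2))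
    refine ⟨v 0 * v 2 ^ 3, v 1 * v 2 ^ 3, v 2 ^ 4, 0, ?_, ?_⟩
    · rintro ⟨-, -, hb, -⟩
      exact hz (pow_eq_zero_iff (n := 4) (by norm_num) |>.mp hb)
    · have e0 : (Phi (v 0 * v 2 ^ 3) (v 1 * v 2 ^ 3) (v 2 ^ 4) 0) 0 = v 0 := by
        simp only [Phi, Matrix.cons_val_zero]; linear_combination (v 0) * h7
      have e1 : (Phi (v 0 * v 2 ^ 3) (v 1 * v 2 ^ 3) (v 2 ^ 4) 0) 1 = v 1 := by
        simp only [Phi, Matrix.cons_val_one, Matrix.head_cons, Matrix.cons_val_zero]; linear_combination (v 1) * h7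
      have e2 : (Phi (v 0 * v 2 ^ 3) (v 1 * v 2 ^ 3) (v 2 ^ 4) 0) 2 = v 2 := by
        simp only [Phi, Matrix.cons_val_two, Matrix.tail_cons, Matrix.head_cons]
        linear_combination frob (v 2)
      have e3 : (Phi (v 0 * v 2 ^ 3) (v 1 * v 2 ^ 3) (v 2 ^ 4) 0) 3 = v 3 := by
        simp only [Phi, Matrix.cons_val_three, Matrix.tail_cons, Matrix.head_cons]
        linear_combination (v 2 ^ 6) * h + (v 3) * h7
      funext i; fin_cases i
      · exact e0
      · exact e1
      · exact e2
      · exact e3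

lemma Dne (p0 p1 q0 q1 r0 r1 s0 s1 : F8)
    (h1 : ¬(p0 = 0 ∧ p1 = 0 ∧ q0 = 0 ∧ q1 = 0))
    (h2 : ¬(r0 = 0 ∧ r1 = 0 ∧ s0 = 0 ∧ s1 = 0))
    (hP : Phi p0 p1 q0 q1 ≠ 0) (hR : Phi r0 r1 s0 s1 ≠ 0)
    (hmk : Projectivization.mk F8 _ hP ≠ Projectivization.mk F8 _ hR)
    (hD0 : D0 p0 p1 q0 q1 r0 r1 s0 s1 = 0) (hD1 : D1 p0 p1 q0 q1 r0 r1 s0 s1 = 0) : False := by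
  apply hmk
  rw [Projectivization.mk_eq_mk_iff']
  by_cases hq : q0 = 0 ∧ q1 = 0
  · obtain ⟨hq0, hq1⟩ := hq
    have hNp : p0 ^ 2 + p0 * p1 + p1 ^ 2 ≠ 0 := fun hN =>
      h1 ⟨(aniso _ _ hN).1, (aniso _ _ hN).2, hq0, hq1⟩
    have hNs0 : s0 ^ 2 + s0 * s1 + s1 ^ 2 = 0 := by
      rcases mul_eq_zero.mp (normzero p0 p1 q0 q1 r0 r1 s0 s1 hD0 hD1 hq0 hq1) with h | h
      · exact absurd h hNp
      · exact h
    obtain ⟨hs0, hs1⟩ := aniso _ _ hNs0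
    have hNr : r0 ^ 2 + r0 * r1 + r1 ^ 2 ≠ 0 := fun hN =>
      h2 ⟨(aniso _ _ hN).1, (aniso _ _ hN).2, hs0, hs1⟩
    subst hq0 hq1 hs0 hs1
    refine ⟨(p0 ^ 2 + p0 * p1 + p1 ^ 2) * (r0 ^ 2 + r0 * r1 + r1 ^ 2)⁻¹, ?_⟩
    have hinv : (r0 ^ 2 + r0 * r1 + r1 ^ 2)⁻¹ * (r0 ^ 2 + r0 * r1 + r1 ^ 2) = 1 :=
      inv_mul_cancel₀ hNr
    have e0 : (((p0 ^ 2 + p0 * p1 + p1 ^ 2) * (r0 ^ 2 + r0 * r1 + r1 ^ 2)⁻¹) •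
        Phi r0 r1 0 0) 0 = (Phi p0 p1 0 0) 0 := by
      simp only [Phi, Pi.smul_apply, smul_eq_mul, Matrix.cons_val_zero]; ring
    have e1 : (((p0 ^ 2 + p0 * p1 + p1 ^ 2) * (r0 ^ 2 + r0 * r1 + r1 ^ 2)⁻¹) •
        Phi r0 r1 0 0) 1 = (Phi p0 p1 0 0) 1 := by
      simp only [Phi, Pi.smul_apply, smul_eq_mul, Matrix.cons_val_one, Matrix.head_cons, Matrix.cons_val_zero]; ring
    have e2 : (((p0 ^ 2 + p0 * p1 + p1 ^ 2) * (r0 ^ 2 + r0 * r1 + r1 ^ 2)⁻¹) •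
        Phi r0 r1 0 0) 2 = (Phi p0 p1 0 0) 2 := by
      simp only [Phi, Pi.smul_apply, smul_eq_mul, Matrix.cons_val_two, Matrix.tail_cons,
        Matrix.head_cons]; ring
    have e3 : (((p0 ^ 2 + p0 * p1 + p1 ^ 2) * (r0 ^ 2 + r0 * r1 + r1 ^ 2)⁻¹) •
        Phi r0 r1 0 0) 3 = (Phi p0 p1 0 0) 3 := by
      simp only [Phi, Pi.smul_apply, smul_eq_mul, Matrix.cons_val_three, Matrix.tail_cons,
        Matrix.head_cons]
      linear_combination (p0 ^ 2 + p0 * p1 + p1 ^ 2) * hinv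
    funext i; fin_cases i
    · exact e0
    · exact e1
    · exact e2
    · exact e3
  · have hNq : q0 ^ 2 + q0 * q1 + q1 ^ 2 ≠ 0 := fun hN =>
      hq ⟨(aniso _ _ hN).1, (aniso _ _ hN).2⟩
    have key := propor p0 p1 q0 q1 r0 r1 s0 s1 hD0 hD1
    have hNs : s0 ^ 2 + s0 * s1 + s1 ^ 2 ≠ 0 := by
      intro h
      apply hR
      have hz : (q0 ^ 2 + q0 * q1 + q1 ^ 2) • Phi r0 r1 s0 s1 = 0 := by
        rw [key, h, zero_smul]
      rcases smul_eq_zero.mp hz with h' | h'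
      · exact absurd h' hNq
      · exact h'
    refine ⟨(s0 ^ 2 + s0 * s1 + s1 ^ 2)⁻¹ * (q0 ^ 2 + q0 * q1 + q1 ^ 2), ?_⟩
    have step : (s0 ^ 2 + s0 * s1 + s1 ^ 2)⁻¹ • ((q0 ^ 2 + q0 * q1 + q1 ^ 2) •
        Phi r0 r1 s0 s1) = (s0 ^ 2 + s0 * s1 + s1 ^ 2)⁻¹ • ((s0 ^ 2 + s0 * s1 + s1 ^ 2) •
        Phi p0 p1 q0 q1) := by rw [key]
    rw [smul_smul, smul_smul, inv_mul_cancel₀ hNs, one_smul] at step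
    exact step

noncomputable def mkEquiv (A B : Matrix (Fin 4) (Fin 4) F8) (c : F8) (hc : c ≠ 0)
    (hAB : ∀ v, A.mulVec (B.mulVec v) = c • v) (hBA : ∀ v, B.mulVec (A.mulVec v) = c • v) :
    (Fin 4 → F8) ≃ₗ[F8] (Fin 4 → F8) :=
  LinearEquiv.ofLinear (Matrix.toLin' A) (c⁻¹ • Matrix.toLin' B)
    (by
      apply LinearMap.ext
      intro v
      simp only [LinearMap.comp_apply, LinearMap.smul_apply, Matrix.toLin'_apply,
        Matrix.mulVec_smul, hAB, LinearMap.id_apply, smul_smul, inv_mul_cancel₀ hc, one_smul])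
    (by
      apply LinearMap.ext
      intro v
      simp only [LinearMap.comp_apply, LinearMap.smul_apply, Matrix.toLin'_apply,
        hBA, LinearMap.id_apply, smul_smul, inv_mul_cancel₀ hc, one_smul])

lemma mkEquiv_apply (A B : Matrix (Fin 4) (Fin 4) F8) (c : F8) (hc : c ≠ 0)
    (hAB : ∀ v, A.mulVec (B.mulVec v) = c • v) (hBA : ∀ v, B.mulVec (A.mulVec v) = c • v)
    (v : Fin 4 → F8) : mkEquiv A B c hc hAB hBA v = A.mulVec v := by
  simp [mkEquiv, Matrix.toLin'_apply]

lemma half (Q : Set (Projectivization F8 (Fin 4 → F8)))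
    (hQ : Q = {p | p.rep 0 ^ 2 + p.rep 0 * p.rep 1 + p.rep 1 ^ 2 = p.rep 2 * p.rep 3})
    (x y : Projectivization F8 (Fin 4 → F8)) (hx : x ∈ Q) (hy : y ∈ Q) (hxy : x ≠ y) :
    ∃ (E : (Fin 4 → F8) ≃ₗ[F8] (Fin 4 → F8)) (c : F8), c ≠ 0 ∧ (∀ v, qf (E v) = c * qf v) ∧
      E x.rep = c • ![0, 0, 0, 1] ∧ E y.rep = c • ![0, 0, 1, 0] := by
  have hqx : qf x.rep = 0 := (mem_iff Q hQ x).mp hx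
  have hqy : qf y.rep = 0 := (mem_iff Q hQ y).mp hy
  obtain ⟨p0, p1, q0, q1, hu1, hE1⟩ := exists_param x.rep x.rep_nonzero hqx
  obtain ⟨r0, r1, s0, s1, hu2, hE2⟩ := exists_param y.rep y.rep_nonzero hqy
  have hP : Phi p0 p1 q0 q1 ≠ 0 := by rw [hE1]; exact x.rep_nonzero
  have hR : Phi r0 r1 s0 s1 ≠ 0 := by rw [hE2]; exact y.rep_nonzero
  have m1 : Projectivization.mk F8 (Phi p0 p1 q0 q1) hP = x := by
    rw [← Projectivization.mk_rep x]
    exact (Projectivization.mk_eq_mk_iff' F8 _ _ hP x.rep_nonzero).mpr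
      ⟨1, by rw [one_smul]; exact hE1.symm⟩
  have m2 : Projectivization.mk F8 (Phi r0 r1 s0 s1) hR = y := by
    rw [← Projectivization.mk_rep y]
    exact (Projectivization.mk_eq_mk_iff' F8 _ _ hR y.rep_nonzero).mpr
      ⟨1, by rw [one_smul]; exact hE2.symm⟩
  have hmk : Projectivization.mk F8 _ hP ≠ Projectivization.mk F8 _ hR := by
    rw [m1, m2]; exact hxy
  have hDn : Dn p0 p1 q0 q1 r0 r1 s0 s1 ≠ 0 := by
    intro h
    simp only [Dn] at h
    obtain ⟨hD0, hD1⟩ := aniso _ _ h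
    exact Dne p0 p1 q0 q1 r0 r1 s0 s1 hu1 hu2 hP hR hmk hD0 hD1
  refine ⟨mkEquiv (Tg p0 p1 q0 q1 r0 r1 s0 s1) (Tg' p0 p1 q0 q1 r0 r1 s0 s1)
      (Dn p0 p1 q0 q1 r0 r1 s0 s1) hDn (TgTg' p0 p1 q0 q1 r0 r1 s0 s1)
      (Tg'Tg p0 p1 q0 q1 r0 r1 s0 s1), Dn p0 p1 q0 q1 r0 r1 s0 s1, hDn, ?_, ?_, ?_⟩
  · intro v; rw [mkEquiv_apply]; exact qf_Tg p0 p1 q0 q1 r0 r1 s0 s1 v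
  · rw [mkEquiv_apply, ← hE1]; exact TgPhi1 p0 p1 q0 q1 r0 r1 s0 s1
  · rw [mkEquiv_apply, ← hE2]; exact TgPhi2 p0 p1 q0 q1 r0 r1 s0 s1

lemma preserve (Q : Set (Projectivization F8 (Fin 4 → F8)))
    (hQ : Q = {p | p.rep 0 ^ 2 + p.rep 0 * p.rep 1 + p.rep 1 ^ 2 = p.rep 2 * p.rep 3})
    (E : (Fin 4 → F8) ≃ₗ[F8] (Fin 4 → F8)) (hE : ∀ v, qf (E v) = 0 ↔ qf v = 0) :
    Projectivization.map E.toLinearMap E.injective '' Q = Q := by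
  ext x
  constructor
  · rintro ⟨y, hyQ, rfl⟩
    rw [← Projectivization.mk_rep y, Projectivization.map_mk, mk_mem_iff Q hQ]
    exact (hE y.rep).mpr ((mem_iff Q hQ y).mp hyQ)
  · intro hx
    have hz : E.symm x.rep ≠ 0 := fun h =>
      x.rep_nonzero (by rw [← E.apply_symm_apply x.rep, h, map_zero])
    refine ⟨Projectivization.mk F8 (E.symm x.rep) hz, ?_, ?_⟩
    · rw [mk_mem_iff Q hQ]
      apply (hE _).mp
      rw [E.apply_symm_apply]
      exact (mem_iff Q hQ x).mp hx
    · rw [Projectivization.map_mk]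
      conv_rhs => rw [← Projectivization.mk_rep x]
      refine (Projectivization.mk_eq_mk_iff' F8 _ _ _ x.rep_nonzero).mpr ⟨1, ?_⟩
      rw [one_smul]
      exact (E.apply_symm_apply x.rep).symm

/-- The group of automorphisms of `ℙ³` over `𝔽₈` (elements of `PGL₄(𝔽₈)`, i.e. maps
induced by linear automorphisms of `𝔽₈⁴`) preserving the quadric `X² + XY + Y² = ZW`
acts 2-transitively on the `𝔽₈`-points of the quadric. -/
theorem stmt_12
    (Q : Set (Projectivization (GaloisField 2 3) (Fin 4 → GaloisField 2 3)))
    (hQ : Q = {p | p.rep 0 ^ 2 + p.rep 0 * p.rep 1 + p.rep 1 ^ 2 = p.rep 2 * p.rep 3})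
    (p₁ p₂ q₁ q₂ : Projectivization (GaloisField 2 3) (Fin 4 → GaloisField 2 3))
    (hp₁ : p₁ ∈ Q) (hp₂ : p₂ ∈ Q) (hq₁ : q₁ ∈ Q) (hq₂ : q₂ ∈ Q)
    (hp : p₁ ≠ p₂) (hq : q₁ ≠ q₂) :
    ∃ σ : (Fin 4 → GaloisField 2 3) ≃ₗ[GaloisField 2 3] (Fin 4 → GaloisField 2 3),
      Projectivization.map σ.toLinearMap σ.injective '' Q = Q ∧
      Projectivization.map σ.toLinearMap σ.injective p₁ = q₁ ∧
      Projectivization.map σ.toLinearMap σ.injective p₂ = q₂ := by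
  obtain ⟨Ep, cp, hcp, hsp, hp1, hp2⟩ := half Q hQ p₁ p₂ hp₁ hp₂ hp
  obtain ⟨Eq', cq, hcq, hsq, hq1, hq2⟩ := half Q hQ q₁ q₂ hq₁ hq₂ hq
  have hsymm : ∀ w, qf (Eq'.symm w) = 0 ↔ qf w = 0 := by
    intro w
    have hw := hsq (Eq'.symm w)
    rw [Eq'.apply_symm_apply] at hw
    constructor
    · intro h; rw [h, mul_zero] at hw; exact hw
    · intro h; rw [h] at hw; exact (mul_eq_zero.mp hw.symm).resolve_left hcq
  have happ : ∀ v, (Ep.trans Eq'.symm).toLinearMap v = Eq'.symm (Ep v) := fun v => rfl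
  refine ⟨Ep.trans Eq'.symm, ?_, ?_, ?_⟩
  · apply preserve Q hQ
    intro v
    rw [LinearEquiv.trans_apply, hsymm (Ep v), hsp v]
    constructor
    · intro h; exact (mul_eq_zero.mp h).resolve_left hcp
    · intro h; rw [h, mul_zero]
  · rw [← Projectivization.mk_rep p₁, Projectivization.map_mk, ← Projectivization.mk_rep q₁]
    refine (Projectivization.mk_eq_mk_iff' F8 _ _ _ q₁.rep_nonzero).mpr ⟨cp * cq⁻¹, ?_⟩
    rw [happ, hp1]
    rw [show (cp : F8) • ![(0 : F8), 0, 0, 1] = (cp * cq⁻¹) • (cq • ![(0 : F8), 0, 0, 1]) from by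
      rw [smul_smul, mul_assoc, inv_mul_cancel₀ hcq, mul_one], ← hq1, map_smul,
      Eq'.symm_apply_apply]
  · rw [← Projectivization.mk_rep p₂, Projectivization.map_mk, ← Projectivization.mk_rep q₂]
    refine (Projectivization.mk_eq_mk_iff' F8 _ _ _ q₂.rep_nonzero).mpr ⟨cp * cq⁻¹, ?_⟩
    rw [happ, hp2]
    rw [show (cp : F8) • ![(0 : F8), 0, 1, 0] = (cp * cq⁻¹) • (cq • ![(0 : F8), 0, 1, 0]) from by
      rw [smul_smul, mul_assoc, inv_mul_cancel₀ hcq, mul_one], ← hq2, map_smul,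
      Eq'.symm_apply_apply]
end
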